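/- arXiv:2403.04548 — 6 statements merged into one kernel-verified Lean document; each statement's English description precedes it below -/
import Mathlib

section
/- The order n of a periodic T-system (a continuous T-system on the unit circle S¹ = {(x,y) ∈ ℝ² : x² + y² = 1}) is even. -/
/-!
Put `n + 1` equally spaced points on the circle, rotated by the angle `t · 2π/(n+1)`, and let
`D t` be the determinant of the collocation matrix `(f_i(p_j(t)))`. It is continuous in `t` and,
since a nontrivial combination cannot vanish at `n + 1` distinct points, never zero. Rotating
from `t = 0` to `t = 1` cyclically permutes the points, an `(n+1)`-cycle of sign `(-1)^n`, so
`D 1 = (-1)^n D 0`; for odd `n` the intermediate value theorem produces a zero of `D`.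
-/

def IsTSystem {X : Type*} (n : ℕ) (F : Fin (n + 1) → X → ℝ) : Prop :=
  ∀ a : Fin (n + 1) → ℝ, a ≠ 0 →
    {x : X | ∑ i, a i * F i x = 0}.encard ≤ (n : ℕ∞)

open Real Set Function

def collocationMatrix {X ι κ : Type*} (F : ι → X → ℝ) (x : κ → X) : Matrix ι κ ℝ :=
  Matrix.of fun i j => F i (x j)

theorem collocationMatrix_comp {X ι κ κ' : Type*} (F : ι → X → ℝ) (x : κ → X) (e : κ' → κ) :
    collocationMatrix F (x ∘ e) = (collocationMatrix F x).submatrix id e :=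
  rfl

theorem IsTSystem.det_collocationMatrix_ne_zero {X : Type*} {n : ℕ} {F : Fin (n + 1) → X → ℝ}
    (hT : IsTSystem n F) {x : Fin (n + 1) → X} (hx : Injective x) :
    (collocationMatrix F x).det ≠ 0 := by
  intro hdet
  obtain ⟨a, ha, hax⟩ := Matrix.exists_vecMul_eq_zero_iff.2 hdet
  have hzeros : range x ⊆ {y | ∑ i, a i * F i y = 0} := by
    rintro _ ⟨j, rfl⟩
    simpa [Matrix.vecMul, dotProduct, collocationMatrix] using congrFun hax j
  have hcard : (range x).encard = n + 1 := by
    rw [← image_univ, hx.injOn.encard_image, encard_univ, ENat.card_eq_coe_fintype_card,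
      Fintype.card_fin, Nat.cast_succ]
  have : n + 1 ≤ n := by exact_mod_cast hcard ▸ (encard_le_encard hzeros).trans (hT a ha)
  omega

theorem exists_eq_zero_of_map_one_eq_neg {f : ℝ → ℝ} (hf : Continuous f) (h : f 1 = -f 0) :
    ∃ t, f t = 0 := by
  have hmem : (0 : ℝ) ∈ uIcc (f 0) (f 1) := by
    rw [h, mem_uIcc]
    rcases le_total 0 (f 0) with h0 | h0
    · exact Or.inr ⟨by linarith, h0⟩
    · exact Or.inl ⟨h0, by linarith⟩
  obtain ⟨t, -, ht⟩ := intermediate_value_uIcc hf.continuousOn hmem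
  exact ⟨t, ht⟩

noncomputable def circlePt (θ : ℝ) : {p : ℝ × ℝ // p.1 ^ 2 + p.2 ^ 2 = 1} :=
  ⟨(cos θ, sin θ), by simp⟩

theorem continuous_circlePt : Continuous circlePt :=
  (continuous_cos.prodMk continuous_sin).subtype_mk _

theorem circlePt_eq_circlePt_iff {θ ψ : ℝ} : circlePt θ = circlePt ψ ↔ (θ : Angle) = ψ := by
  refine ⟨fun h => Angle.cos_sin_inj (congrArg (·.1.1) h) (congrArg (·.1.2) h), fun h => ?_⟩
  simp [circlePt, ← Angle.cos_coe, ← Angle.sin_coe, h]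

theorem injOn_circlePt_Ico (t : ℝ) : InjOn circlePt (Ico t (t + 2 * π)) := fun _ hθ _ hψ h =>
  haveI : Fact (0 < 2 * π) := ⟨two_pi_pos⟩
  (AddCircle.coe_eq_coe_iff_of_mem_Ico hθ hψ).1 (circlePt_eq_circlePt_iff.1 h)

noncomputable def equispacedCirclePt (m : ℕ) (t : ℝ) (j : Fin m) :
    {p : ℝ × ℝ // p.1 ^ 2 + p.2 ^ 2 = 1} :=
  circlePt ((j + t) * (2 * π / m))

theorem continuous_equispacedCirclePt (m : ℕ) (j : Fin m) :
    Continuous fun t => equispacedCirclePt m t j :=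
  continuous_circlePt.comp (by fun_prop)

theorem injective_equispacedCirclePt (m : ℕ) (t : ℝ) : Injective (equispacedCirclePt m t) := by
  intro j k hjk
  have hm : (0 : ℝ) < m := by exact_mod_cast j.pos
  set α := 2 * π / m with hα_def
  have hα : 0 < α := by positivity
  have hmem (i : Fin m) : ((i : ℝ) + t) * α ∈ Ico (t * α) (t * α + 2 * π) := by
    have hiα : (i : ℝ) * α < m * α := mul_lt_mul_of_pos_right (by exact_mod_cast i.isLt) hα
    rw [hα_def, mul_div_cancel₀ _ hm.ne'] at hiα
    constructor <;> nlinarith [Nat.cast_nonneg (α := ℝ) i]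
  have := injOn_circlePt_Ico _ (hmem j) (hmem k) hjk
  exact Fin.ext (by exact_mod_cast add_right_cancel (mul_right_cancel₀ hα.ne' this))

theorem circlePt_mod_mul (m k : ℕ) :
    circlePt ((k % m : ℕ) * (2 * π / m)) = circlePt (k * (2 * π / m)) := by
  rcases m.eq_zero_or_pos with rfl | hm
  · rw [Nat.mod_zero]
  rw [circlePt_eq_circlePt_iff, Angle.angle_eq_iff_two_pi_dvd_sub]
  refine ⟨-((k / m : ℕ) : ℤ), ?_⟩
  have hk : ((k % m : ℕ) : ℝ) + m * (k / m : ℕ) = k := by exact_mod_cast Nat.mod_add_div k m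
  rw [Int.cast_neg, Int.cast_natCast, ← hk]
  field_simp
  ring

theorem equispacedCirclePt_comp_finRotate (m : ℕ) :
    equispacedCirclePt m 0 ∘ finRotate m = equispacedCirclePt m 1 := by
  cases m with
  | zero => exact funext fun j => j.elim0
  | succ n =>
    funext j
    simp only [comp_apply, equispacedCirclePt, finRotate_apply, Fin.val_add, Fin.val_one',
      Nat.add_mod_mod, add_zero]
    exact_mod_cast circlePt_mod_mul (n + 1) (j + 1)

/-- The order of a periodic T-system (a continuous T-system on the unit circle) is even. -/
theorem stmt8 (n : ℕ)
    (F : Fin (n + 1) → {p : ℝ × ℝ // p.1 ^ 2 + p.2 ^ 2 = 1} → ℝ)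
    (hcont : ∀ i, Continuous (F i))
    (hT : IsTSystem n F) :
    Even n := by
  by_contra hodd
  set D : ℝ → ℝ := fun t => (collocationMatrix F (equispacedCirclePt (n + 1) t)).det
  have hD_cont : Continuous D :=
    (continuous_matrix fun i j => (hcont i).comp (continuous_equispacedCirclePt _ j)).matrix_det
  have hD_flip : D 1 = -D 0 := by
    simp only [D, ← equispacedCirclePt_comp_finRotate, collocationMatrix_comp,
      Matrix.det_permute', sign_finRotate, Nat.add_sub_cancel,
      (Nat.not_even_iff_odd.1 hodd).neg_one_pow, Units.val_neg, Units.val_one, Int.cast_neg,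
      Int.cast_one, neg_one_mul]
  obtain ⟨t, ht⟩ := exists_eq_zero_of_map_one_eq_neg hD_cont hD_flip
  exact hT.det_collocationMatrix_ne_zero (injective_equispacedCirclePt _ t) ht
end

section
/- Let F = {f_0,...,f_n} be a continuous T-system of order n on [a,b] with a < b. If a nonzero f ∈ lin F has k non-nodal zeros (interior zeros at which f does not change sign) and l nodal zeros in [a,b], then 2k + l ≤ n. -/
lemma tsys_card_le {n : ℕ} {a b : ℝ} {F : Fin (n+1) → ℝ → ℝ}
    (hT : ∀ c : Fin (n + 1) → ℝ, c ≠ 0 →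
      {x ∈ Set.Icc a b | ∑ i, c i * F i x = 0}.encard ≤ (n : ℕ∞))
    {c : Fin (n+1) → ℝ} (hc : c ≠ 0) (S : Finset ℝ)
    (hS : ∀ x ∈ S, x ∈ Set.Icc a b ∧ ∑ i, c i * F i x = 0) :
    S.card ≤ n := by
  have h1 : (S : Set ℝ) ⊆ {x ∈ Set.Icc a b | ∑ i, c i * F i x = 0} := fun x hx => hS x hx
  have h2 := (Set.encard_mono h1).trans (hT c hc)
  rw [Set.encard_coe_eq_coe_finsetCard] at h2
  exact_mod_cast h2

lemma tsys_exists_ne {n : ℕ} {a b : ℝ} {F : Fin (n+1) → ℝ → ℝ}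
    (hT : ∀ c : Fin (n + 1) → ℝ, c ≠ 0 →
      {x ∈ Set.Icc a b | ∑ i, c i * F i x = 0}.encard ≤ (n : ℕ∞))
    {c : Fin (n+1) → ℝ} (hc : c ≠ 0) {u v : ℝ} (huv : u < v)
    (hsub : Set.Ioo u v ⊆ Set.Icc a b) :
    ∃ x ∈ Set.Ioo u v, ∑ i, c i * F i x ≠ 0 := by
  by_contra h
  push_neg at h
  have hsub2 : Set.Ioo u v ⊆ {x ∈ Set.Icc a b | ∑ i, c i * F i x = 0} :=
    fun x hx => ⟨hsub hx, h x hx⟩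
  have hinf : ({x ∈ Set.Icc a b | ∑ i, c i * F i x = 0}).Infinite :=
    (Set.Ioo_infinite huv).mono hsub2
  have := hT c hc
  rw [hinf.encard_eq] at this
  exact absurd this (by simp)

lemma tsys_interp {n : ℕ} {a b : ℝ} (hab : a < b) {F : Fin (n+1) → ℝ → ℝ}
    (hT : ∀ c : Fin (n + 1) → ℝ, c ≠ 0 →
      {x ∈ Set.Icc a b | ∑ i, c i * F i x = 0}.encard ≤ (n : ℕ∞))
    (S : Finset ℝ) (hS : ↑S ⊆ Set.Icc a b) (hcard : S.card ≤ n + 1) (v : ℝ → ℝ) :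
    ∃ d : Fin (n+1) → ℝ, ∀ s ∈ S, ∑ i, d i * F i s = v s := by
  -- extend S to a finset T ⊆ Icc a b of card n+1
  have hinf : (Set.Icc a b \ ↑S).Infinite :=
    (Set.Icc_infinite hab).diff S.finite_toSet
  obtain ⟨S', hS'sub, hS'card⟩ := hinf.exists_subset_card_eq (n + 1 - S.card)
  set T : Finset ℝ := S ∪ S' with hT'
  have hdisj : Disjoint S S' := by
    rw [Finset.disjoint_left]
    intro x hx hx'
    exact (hS'sub hx').2 hx
  have hTcard : T.card = n + 1 := by
    rw [Finset.card_union_of_disjoint hdisj, hS'card]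
    omega
  have hTsub : ↑T ⊆ Set.Icc a b := by
    intro x hx
    rw [hT'] at hx
    simp only [Finset.coe_union, Set.mem_union] at hx
    rcases hx with hx | hx
    · exact hS hx
    · exact (hS'sub hx).1
  -- index T
  obtain ⟨t, htinj, htmem, htsurj⟩ :
      ∃ t : Fin (n+1) → ℝ, Function.Injective t ∧ (∀ j, t j ∈ Set.Icc a b) ∧
        ∀ s ∈ T, ∃ j, t j = s := by
    refine ⟨fun j => (T.equivFin.symm (finCongr hTcard.symm j) : ℝ), ?_, ?_, ?_⟩
    · exact Subtype.val_injective.comp (T.equivFin.symm.injective.comp (finCongr hTcard.symm).injective)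
    · intro j; exact hTsub (T.equivFin.symm (finCongr hTcard.symm j)).2
    · intro s hs
      refine ⟨finCongr hTcard (T.equivFin ⟨s, hs⟩), ?_⟩
      simp
  set M : Matrix (Fin (n+1)) (Fin (n+1)) ℝ := Matrix.of (fun j i => F i (t j)) with hM
  have hker : ∀ d, M.mulVecLin d = 0 → d = 0 := by
    intro d hd
    by_contra hd0
    have hz : ∀ j, ∑ i, d i * F i (t j) = 0 := by
      intro j
      have := congrFun hd j
      simpa [Matrix.mulVecLin_apply, Matrix.mulVec, dotProduct, hM, mul_comm] using this
    have hcardle := tsys_card_le hT hd0 (Finset.univ.image t)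
      (by
        intro x hx
        simp only [Finset.mem_image, Finset.mem_univ, true_and] at hx
        obtain ⟨j, rfl⟩ := hx
        exact ⟨htmem j, hz j⟩)
    rw [Finset.card_image_of_injective _ htinj, Finset.card_univ, Fintype.card_fin] at hcardle
    omega
  have hinj : Function.Injective M.mulVecLin := by
    rw [← LinearMap.ker_eq_bot, LinearMap.ker_eq_bot']
    exact hker
  have hsurj := (LinearMap.injective_iff_surjective).mp hinj
  obtain ⟨d, hd⟩ := hsurj (fun j => v (t j))
  refine ⟨d, fun s hs => ?_⟩
  obtain ⟨j, rfl⟩ := htsurj s (Finset.mem_union_left _ hs)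
  have := congrFun hd j
  simp only [Matrix.mulVecLin_apply, Matrix.mulVec, dotProduct, hM, Matrix.of_apply] at this
  rw [← this]
  exact Finset.sum_congr rfl (fun i _ => mul_comm _ _)

lemma sign_helper {s fv gv ε : ℝ} (hs : s = 1 ∨ s = -1) (h1 : 0 < s * fv)
    (hε : 0 < ε) (h2 : ε * |gv| < |fv|) : 0 < s * (fv - ε * gv) := by
  have h3 : ε * gv ≤ ε * |gv| := by nlinarith [le_abs_self gv]
  have h4 : -(ε * |gv|) ≤ ε * gv := by nlinarith [neg_abs_le gv]
  rcases hs with rfl | rfl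
  · have hp : 0 < fv := by nlinarith
    rw [abs_of_pos hp] at h2; nlinarith
  · have hp : fv < 0 := by nlinarith
    rw [abs_of_neg hp] at h2; nlinarith


/-- Bound on the number of nodal and non-nodal zeros of a nonzero polynomial of a
continuous T-system on `[a,b]`: if it has `k` non-nodal zeros and `l` nodal zeros,
then `2k + l ≤ n`. -/
theorem stmt9 (n : ℕ) (a b : ℝ) (hab : a < b)
    (F : Fin (n + 1) → ℝ → ℝ)
    (hcont : ∀ i, ContinuousOn (F i) (Set.Icc a b))
    (hT : ∀ c : Fin (n + 1) → ℝ, c ≠ 0 →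
      {x ∈ Set.Icc a b | ∑ i, c i * F i x = 0}.encard ≤ (n : ℕ∞))
    (c : Fin (n + 1) → ℝ) (hc : c ≠ 0)
    (f : ℝ → ℝ) (hf : f = fun x => ∑ i, c i * F i x)
    (K L : Finset ℝ)
    -- `K` consists of non-nodal zeros: interior zeros at which `f` does not change sign
    (hK : ∀ x ∈ K, x ∈ Set.Ioo a b ∧ f x = 0 ∧
      ∃ ε > 0,
        (∀ y ∈ Set.Icc a b ∩ Set.Ioo (x - ε) (x + ε), 0 ≤ f y) ∨
        (∀ y ∈ Set.Icc a b ∩ Set.Ioo (x - ε) (x + ε), f y ≤ 0))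
    -- `L` consists of nodal zeros: zeros that are not non-nodal
    (hL : ∀ x ∈ L, x ∈ Set.Icc a b ∧ f x = 0 ∧
      ¬(x ∈ Set.Ioo a b ∧ ∃ ε > 0,
        (∀ y ∈ Set.Icc a b ∩ Set.Ioo (x - ε) (x + ε), 0 ≤ f y) ∨
        (∀ y ∈ Set.Icc a b ∩ Set.Ioo (x - ε) (x + ε), f y ≤ 0)))
    (hdisj : Disjoint K L) :
    2 * K.card + L.card ≤ n := by
  by_contra hlt
  push_neg at hlt
  -- All points of K ∪ L are zeros of f in [a,b]
  have hfz : ∀ x ∈ K ∪ L, x ∈ Set.Icc a b ∧ ∑ i, c i * F i x = 0 := by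
    intro x hx
    rcases Finset.mem_union.mp hx with hx | hx
    · obtain ⟨h1, h2, _⟩ := hK x hx
      exact ⟨Set.mem_Icc_of_Ioo h1, by rw [hf] at h2; exact h2⟩
    · obtain ⟨h1, h2, _⟩ := hL x hx
      exact ⟨h1, by rw [hf] at h2; exact h2⟩
  have hKL : K.card + L.card ≤ n := by
    have := tsys_card_le hT hc (K ∪ L) hfz
    rwa [Finset.card_union_of_disjoint hdisj] at this
  have hKne : K.Nonempty := by
    rcases K.eq_empty_or_nonempty with h | h
    · rw [h] at hlt; simp at hlt; omega
    · exact h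
  -- Skolemize the data attached to each non-nodal zero
  have hpack : ∀ x : ℝ, ∃ p : ℝ × ℝ × ℝ × ℝ, x ∈ K →
      (0 < p.1 ∧ a < x - p.1 ∧ x + p.1 < b ∧
        (∀ y ∈ K ∪ L, y ≠ x → 2 * p.1 ≤ |y - x|) ∧
        (x - p.1 < p.2.1 ∧ p.2.1 < x) ∧ (x < p.2.2.1 ∧ p.2.2.1 < x + p.1) ∧
        (p.2.2.2 = 1 ∨ p.2.2.2 = -1) ∧
        0 < p.2.2.2 * f p.2.1 ∧ 0 < p.2.2.2 * f p.2.2.1) := by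
    intro x
    by_cases hxK : x ∈ K
    swap
    · exact ⟨(0,0,0,0), fun h => absurd h hxK⟩
    obtain ⟨hx1, hx2, ε, hε, hsign⟩ := hK x hxK
    obtain ⟨hax, hxb⟩ := hx1
    -- choose δ
    set A := (K ∪ L).erase x with hA
    have hδex : ∃ δ : ℝ, 0 < δ ∧ δ ≤ ε ∧ δ ≤ (x - a)/2 ∧ δ ≤ (b - x)/2 ∧
        ∀ y ∈ A, 2 * δ ≤ |y - x| := by
      set δ1 := min ε (min ((x - a)/2) ((b - x)/2)) with hδ1
      have hδ1pos : 0 < δ1 := by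
        apply lt_min (by linarith)
        apply lt_min <;> linarith
      rcases A.eq_empty_or_nonempty with hAe | hAne
      · exact ⟨δ1, hδ1pos, min_le_left _ _, (min_le_right _ _).trans (min_le_left _ _),
          (min_le_right _ _).trans (min_le_right _ _), by simp [hAe]⟩
      · refine ⟨min δ1 (A.inf' hAne (fun y => |y - x| / 2)), ?_, ?_, ?_, ?_, ?_⟩
        · apply lt_min hδ1pos
          rw [Finset.lt_inf'_iff]
          intro y hy
          have : y ≠ x := Finset.ne_of_mem_erase hy
          have : |y - x| > 0 := abs_pos.mpr (sub_ne_zero.mpr this)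
          linarith
        · exact (min_le_left _ _).trans (min_le_left _ _)
        · exact (min_le_left _ _).trans ((min_le_right _ _).trans (min_le_left _ _))
        · exact (min_le_left _ _).trans ((min_le_right _ _).trans (min_le_right _ _))
        · intro y hy
          have h1 : A.inf' hAne (fun y => |y - x| / 2) ≤ |y - x| / 2 :=
            Finset.inf'_le _ hy
          have h2 : min δ1 (A.inf' hAne (fun y => |y - x| / 2)) ≤ |y - x| / 2 :=
            (min_le_right _ _).trans h1
          linarith
    obtain ⟨δ, hδpos, hδε, hδa, hδb, hδsep⟩ := hδex
    have haxδ : a < x - δ := by linarith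
    have hxδb : x + δ < b := by linarith
    -- choose u and w where f doesn't vanish
    have hsub1 : Set.Ioo (x - δ) x ⊆ Set.Icc a b := by
      intro y hy
      exact ⟨le_of_lt (lt_trans haxδ hy.1), le_of_lt (lt_trans hy.2 hxb)⟩
    have hsub2 : Set.Ioo x (x + δ) ⊆ Set.Icc a b := by
      intro y hy
      exact ⟨le_of_lt (lt_trans hax hy.1), le_of_lt (lt_trans hy.2 hxδb)⟩
    obtain ⟨u, hu, hfu⟩ := tsys_exists_ne hT hc (by linarith : x - δ < x) hsub1
    obtain ⟨w, hw, hfw⟩ := tsys_exists_ne hT hc (by linarith : x < x + δ) hsub2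
    replace hfu : f u ≠ 0 := by simp only [hf]; exact hfu
    replace hfw : f w ≠ 0 := by simp only [hf]; exact hfw
    have humem : u ∈ Set.Icc a b ∩ Set.Ioo (x - ε) (x + ε) :=
      ⟨hsub1 hu, by constructor <;> [linarith [hu.1]; linarith [hu.2]]⟩
    have hwmem : w ∈ Set.Icc a b ∩ Set.Ioo (x - ε) (x + ε) :=
      ⟨hsub2 hw, by constructor <;> [linarith [hw.1]; linarith [hw.2]]⟩
    rcases hsign with hpos | hneg
    · refine ⟨(δ, u, w, 1), fun _ => ⟨hδpos, haxδ, hxδb, ?_, ⟨hu.1, hu.2⟩, ⟨hw.1, hw.2⟩,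
        Or.inl rfl, ?_, ?_⟩⟩
      · intro y hy hyx
        exact hδsep y (Finset.mem_erase.mpr ⟨hyx, hy⟩)
      · have := hpos u humem; rw [one_mul]; exact lt_of_le_of_ne this (Ne.symm hfu)
      · have := hpos w hwmem; rw [one_mul]; exact lt_of_le_of_ne this (Ne.symm hfw)
    · refine ⟨(δ, u, w, -1), fun _ => ⟨hδpos, haxδ, hxδb, ?_, ⟨hu.1, hu.2⟩, ⟨hw.1, hw.2⟩,
        Or.inr rfl, ?_, ?_⟩⟩
      · intro y hy hyx
        exact hδsep y (Finset.mem_erase.mpr ⟨hyx, hy⟩)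
      · have h1 := hneg u humem
        have h2 : f u < 0 := lt_of_le_of_ne h1 hfu
        show (0:ℝ) < -1 * f u
        nlinarith
      · have h1 := hneg w hwmem
        have h2 : f w < 0 := lt_of_le_of_ne h1 hfw
        show (0:ℝ) < -1 * f w
        nlinarith
  choose p hp using hpack
  set δ : ℝ → ℝ := fun x => (p x).1 with hδdef
  set u : ℝ → ℝ := fun x => (p x).2.1 with hudef
  set w : ℝ → ℝ := fun x => (p x).2.2.1 with hwdef
  set s : ℝ → ℝ := fun x => (p x).2.2.2 with hsdef
  -- interpolation
  obtain ⟨d, hd⟩ := tsys_interp hab hT (K ∪ L)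
    (fun x hx => (hfz x hx).1) (by rw [Finset.card_union_of_disjoint hdisj]; omega)
    (fun y => if y ∈ K then s y else 0)
  set g : ℝ → ℝ := fun y => ∑ i, d i * F i y with hgdef
  have hgK : ∀ x ∈ K, g x = s x := by
    intro x hx
    have := hd x (Finset.mem_union_left _ hx)
    rwa [if_pos hx] at this
  have hgL : ∀ y ∈ L, g y = 0 := by
    intro y hy
    have := hd y (Finset.mem_union_right _ hy)
    rwa [if_neg (Finset.disjoint_right.mp hdisj hy)] at this
  -- choose ε
  set ε0 : ℝ := K.inf' hKne (fun x => min (|f (u x)| / (|g (u x)| + 1))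
    (|f (w x)| / (|g (w x)| + 1))) with hε0def
  have hfune : ∀ x ∈ K, f (u x) ≠ 0 := by
    intro x hx
    have h := (hp x hx).2.2.2.2.2.2.2.1
    intro h0; rw [h0, mul_zero] at h; exact lt_irrefl 0 h
  have hfwne : ∀ x ∈ K, f (w x) ≠ 0 := by
    intro x hx
    have h := (hp x hx).2.2.2.2.2.2.2.2
    intro h0; rw [h0, mul_zero] at h; exact lt_irrefl 0 h
  have hε0pos : 0 < ε0 := by
    rw [hε0def, Finset.lt_inf'_iff]
    intro x hx
    apply lt_min
    · exact div_pos (abs_pos.mpr (hfune x hx)) (by positivity)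
    · exact div_pos (abs_pos.mpr (hfwne x hx)) (by positivity)
  have hbound : ∀ ε', 0 < ε' → ε' ≤ ε0 → ∀ x ∈ K,
      ε' * |g (u x)| < |f (u x)| ∧ ε' * |g (w x)| < |f (w x)| := by
    intro ε' hε' hε'le x hx
    have h1 : ε0 ≤ |f (u x)| / (|g (u x)| + 1) :=
      (Finset.inf'_le _ hx).trans (min_le_left _ _)
    have h2 : ε0 ≤ |f (w x)| / (|g (w x)| + 1) :=
      (Finset.inf'_le _ hx).trans (min_le_right _ _)
    constructor
    · have := (le_div_iff₀ (by positivity : (0:ℝ) < |g (u x)| + 1)).mp (hε'le.trans h1)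
      nlinarith [abs_nonneg (g (u x))]
    · have := (le_div_iff₀ (by positivity : (0:ℝ) < |g (w x)| + 1)).mp (hε'le.trans h2)
      nlinarith [abs_nonneg (g (w x))]
  have hεex : ∃ ε, 0 < ε ∧ ε ≤ ε0 ∧ c - ε • d ≠ 0 := by
    by_cases h1 : c - ε0 • d = 0
    · refine ⟨ε0 / 2, by linarith, by linarith, ?_⟩
      intro h2
      have hd0 : (ε0 / 2) • d = 0 := by
        have : ε0 • d = (ε0/2) • d := by
          have e1 : c = ε0 • d := by rwa [sub_eq_zero] at h1
          have e2 : c = (ε0/2) • d := by rwa [sub_eq_zero] at h2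
          rw [← e1, ← e2]
        have : (ε0 - ε0/2) • d = 0 := by rw [sub_smul, this, sub_self]
        rwa [show ε0 - ε0/2 = ε0/2 by ring] at this
      have : d = 0 := by
        funext i
        have := congrFun hd0 i
        simp only [Pi.smul_apply, smul_eq_mul, Pi.zero_apply] at this ⊢
        have hne : ε0 / 2 ≠ 0 := by positivity
        exact (mul_eq_zero.mp this).resolve_left hne
      rw [this, smul_zero, sub_zero] at h1
      exact hc h1
    · exact ⟨ε0, hε0pos, le_refl _, h1⟩
  obtain ⟨ε, hεpos, hεle, hene⟩ := hεex
  set e : Fin (n+1) → ℝ := c - ε • d with hedef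
  set h : ℝ → ℝ := fun y => f y - ε * g y with hhdef
  have hhe : ∀ y, h y = ∑ i, e i * F i y := by
    intro y
    simp only [hhdef, hedef, hf, hgdef, Pi.sub_apply, Pi.smul_apply, smul_eq_mul,
      sub_mul, Finset.sum_sub_distrib, Finset.mul_sum, mul_assoc]
  have hhcont : ContinuousOn h (Set.Icc a b) := by
    have : ContinuousOn (fun y => ∑ i, e i * F i y) (Set.Icc a b) := by
      apply continuousOn_finset_sum
      intro i _
      exact continuousOn_const.mul (hcont i)
    exact this.congr (fun y _ => hhe y)
  -- zeros near each non-nodal zero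
  have hzex : ∀ x : ℝ, ∃ z : ℝ × ℝ, x ∈ K →
      (x - δ x < z.1 ∧ z.1 < x ∧ x < z.2 ∧ z.2 < x + δ x ∧ h z.1 = 0 ∧ h z.2 = 0) := by
    intro x
    by_cases hxK : x ∈ K
    swap
    · exact ⟨(0,0), fun hh => absurd hh hxK⟩
    obtain ⟨hδpos, haxδ, hxδb, hsep, ⟨hu1, hu2⟩, ⟨hw1, hw2⟩, hs1, hsu, hsw⟩ := hp x hxK
    replace hs1 : s x = 1 ∨ s x = -1 := hs1
    have hbx := hbound ε hεpos hεle x hxK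
    have hhu : 0 < s x * h (u x) := sign_helper hs1 hsu hεpos hbx.1
    have hhw : 0 < s x * h (w x) := sign_helper hs1 hsw hεpos hbx.2
    have hfx : f x = 0 := by
      rw [hf]
      exact (hfz x (Finset.mem_union_left _ hxK)).2
    have hhx : s x * h x < 0 := by
      have hgx := hgK x hxK
      have hs2 : s x * s x = 1 := by rcases hs1 with h' | h' <;> rw [h'] <;> ring
      simp only [hhdef, hfx, hgx, zero_sub]
      calc s x * -(ε * s x) = -(ε * (s x * s x)) := by ring
        _ = -ε := by rw [hs2, mul_one]
        _ < 0 := by linarith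
    have hIccsub : Set.Icc (x - δ x) (x + δ x) ⊆ Set.Icc a b := by
      intro y hy
      exact ⟨le_of_lt (lt_of_lt_of_le haxδ hy.1), le_of_lt (lt_of_le_of_lt hy.2 hxδb)⟩
    have hφcont : ContinuousOn (fun y => s x * h y) (Set.Icc a b) :=
      continuousOn_const.mul hhcont
    -- zero in (u x, x)
    have hsub1 : Set.Icc (u x) x ⊆ Set.Icc a b := by
      intro y hy
      exact hIccsub ⟨le_trans (le_of_lt hu1) hy.1, le_trans hy.2 (by linarith)⟩
    have hiv1 := intermediate_value_Ioo' (le_of_lt hu2) (hφcont.mono hsub1)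
    have h01 : (0:ℝ) ∈ Set.Ioo (s x * h x) (s x * h (u x)) := ⟨hhx, hhu⟩
    obtain ⟨z1, hz1mem, hz1⟩ := hiv1 h01
    -- zero in (x, w x)
    have hsub2 : Set.Icc x (w x) ⊆ Set.Icc a b := by
      intro y hy
      exact hIccsub ⟨le_trans (by linarith) hy.1, le_trans hy.2 (le_of_lt hw2)⟩
    have hiv2 := intermediate_value_Ioo (le_of_lt hw1) (hφcont.mono hsub2)
    have h02 : (0:ℝ) ∈ Set.Ioo (s x * h x) (s x * h (w x)) := ⟨hhx, hhw⟩
    obtain ⟨z2, hz2mem, hz2⟩ := hiv2 h02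
    have hsne : s x ≠ 0 := by rcases hs1 with h' | h' <;> rw [h'] <;> norm_num
    refine ⟨(z1, z2), fun _ => ⟨by linarith [hz1mem.1, hu1], hz1mem.2, hz2mem.1,
      by linarith [hz2mem.2, hw2], ?_, ?_⟩⟩
    · exact (mul_eq_zero.mp hz1).resolve_left hsne
    · exact (mul_eq_zero.mp hz2).resolve_left hsne
  choose z hz using hzex
  set z1 : ℝ → ℝ := fun x => (z x).1 with hz1def
  set z2 : ℝ → ℝ := fun x => (z x).2 with hz2def
  -- separation
  have hzin : ∀ x ∈ K, |z1 x - x| < δ x ∧ |z2 x - x| < δ x := by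
    intro x hx
    obtain ⟨h1, h2, h3, h4, _, _⟩ := hz x hx
    constructor <;> rw [abs_sub_lt_iff] <;> constructor <;> linarith
  have hsepKK : ∀ x ∈ K, ∀ x' ∈ K, x ≠ x' → ∀ q q' : ℝ,
      |q - x| < δ x → |q' - x'| < δ x' → q ≠ q' := by
    intro x hx x' hx' hne q q' hq hq' heq
    have h1 := (hp x hx).2.2.2.1 x' (Finset.mem_union_left _ hx') (Ne.symm hne)
    have h2 := (hp x' hx').2.2.2.1 x (Finset.mem_union_left _ hx) hne
    subst heq
    have e0 : |x' - x| ≤ |x' - q| + |q - x| := abs_sub_le x' q x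
    have e1 : |x' - q| = |q - x'| := abs_sub_comm _ _
    have e2 : |x - x'| = |x' - x| := abs_sub_comm _ _
    linarith
  have hsepKL : ∀ x ∈ K, ∀ y ∈ L, ∀ q : ℝ, |q - x| < δ x → q ≠ y := by
    intro x hx y hy q hq heq
    subst heq
    have hyx : q ≠ x := fun h => (Finset.disjoint_left.mp hdisj hx) (h ▸ hy)
    have h1 := (hp x hx).2.2.2.1 q (Finset.mem_union_right _ hy) hyx
    have h2 := (hp x hx).1
    linarith
  -- assemble the zero set of h
  set T : Finset ℝ := (L ∪ K.image z1) ∪ K.image z2 with hTdef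
  have hinj1 : Set.InjOn z1 K := by
    intro x hx x' hx' heq
    by_contra hne
    exact hsepKK x hx x' hx' hne (z1 x) (z1 x') (hzin x hx).1 (hzin x' hx').1 heq
  have hinj2 : Set.InjOn z2 K := by
    intro x hx x' hx' heq
    by_contra hne
    exact hsepKK x hx x' hx' hne (z2 x) (z2 x') (hzin x hx).2 (hzin x' hx').2 heq
  have hd1 : Disjoint L (K.image z1) := by
    rw [Finset.disjoint_right]
    intro q hq hqL
    obtain ⟨x, hx, rfl⟩ := Finset.mem_image.mp hq
    exact hsepKL x hx _ hqL (z1 x) (hzin x hx).1 rfl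
  have hd2 : Disjoint (L ∪ K.image z1) (K.image z2) := by
    rw [Finset.disjoint_right]
    intro q hq hqU
    obtain ⟨x, hx, rfl⟩ := Finset.mem_image.mp hq
    rcases Finset.mem_union.mp hqU with hqL | hq1
    · exact hsepKL x hx _ hqL (z2 x) (hzin x hx).2 rfl
    · obtain ⟨x', hx', heq⟩ := Finset.mem_image.mp hq1
      by_cases hxx : x' = x
      · subst hxx
        obtain ⟨_, hlt1, hlt2, _, _, _⟩ := hz x' hx'
        have : z1 x' < z2 x' := by linarith
        exact absurd heq (ne_of_lt this)
      · exact hsepKK x' hx' x hx hxx (z1 x') (z2 x) (hzin x' hx').1 (hzin x hx).2 heq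
  have hTcard : T.card = 2 * K.card + L.card := by
    rw [hTdef, Finset.card_union_of_disjoint hd2, Finset.card_union_of_disjoint hd1,
      Finset.card_image_of_injOn hinj1, Finset.card_image_of_injOn hinj2]
    ring
  have hTzero : ∀ q ∈ T, q ∈ Set.Icc a b ∧ ∑ i, e i * F i q = 0 := by
    intro q hq
    rw [hTdef] at hq
    have hmem : q ∈ Set.Icc a b ∧ h q = 0 := by
      rcases Finset.mem_union.mp hq with hq | hq
      · rcases Finset.mem_union.mp hq with hqL | hq1
        · refine ⟨(hL q hqL).1, ?_⟩
          have hfq : f q = 0 := (hL q hqL).2.1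
          have hgq : g q = 0 := hgL q hqL
          simp [hhdef, hfq, hgq]
        · obtain ⟨x, hx, rfl⟩ := Finset.mem_image.mp hq1
          obtain ⟨h1, h2, _, _, h5, _⟩ := hz x hx
          have ha1 := (hp x hx).2.1
          have hb1 := (hp x hx).2.2.1
          exact ⟨⟨by linarith, by linarith⟩, h5⟩
      · obtain ⟨x, hx, rfl⟩ := Finset.mem_image.mp hq
        obtain ⟨_, _, h3, h4, _, h6⟩ := hz x hx
        have ha1 := (hp x hx).2.1
        have hb1 := (hp x hx).2.2.1
        exact ⟨⟨by linarith, by linarith⟩, h6⟩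
    exact ⟨hmem.1, by rw [← hhe]; exact hmem.2⟩
  have := tsys_card_le hT hene T hTzero
  omega
end

section
/- Let F = {f_0,...,f_n} be an ET-system on [c,d] and let g ∈ C^n([a,b],[c,d]) with g' > 0 on [a,b]. Then {f_0∘g,...,f_n∘g} is an ET-system on [a,b] and W(f_0∘g,...,f_n∘g) = (g')^{n(n+1)/2} · (W(f_0,...,f_n) ∘ g). -/
open Set

/-- `f` has at most `N` zeros in `[a,b]` counted with algebraic multiplicities. -/
def ZerosLE (a b : ℝ) (f : ℝ → ℝ) (N : ℕ) : Prop :=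
  ∀ z : Finset ℝ, ↑z ⊆ Set.Icc a b →
    ∀ m : ℝ → ℕ,
      (∀ x ∈ z, ∀ k < m x, iteratedDerivWithin k f (Set.Icc a b) x = 0) →
      ∑ x ∈ z, m x ≤ N

/-- An ET-system of order `n` on `[a,b]`: `C^n` functions such that every nonzero
linear combination has at most `n` zeros counted with algebraic multiplicities. -/
def IsETSystem (n : ℕ) (a b : ℝ) (F : Fin (n + 1) → ℝ → ℝ) : Prop :=
  (∀ i, ContDiffOn ℝ n (F i) (Set.Icc a b)) ∧
    ∀ c : Fin (n + 1) → ℝ, c ≠ 0 → ZerosLE a b (fun x => ∑ i, c i * F i x) n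

/-- The Wronskian determinant of `F` on `[a,b]`. -/
noncomputable def Wr (n : ℕ) (a b : ℝ) (F : Fin (n + 1) → ℝ → ℝ) (x : ℝ) : ℝ :=
  Matrix.det (Matrix.of fun i k : Fin (n + 1) =>
    iteratedDerivWithin (k : ℕ) (F i) (Set.Icc a b) x)


/-! By induction on `k`, `(h ∘ g)⁽ᵏ⁾ = ∑_{j ≤ k} B k j * h⁽ʲ⁾ ∘ g` with `B k j = 0` for `j > k` and
`B k k = (g')ᵏ`. Hence the Wronskian matrix of `F ∘ g` at `x` is that of `F` at `g x` times the
upper triangular matrix `(B k j x)`, of determinant `(g' x) ^ (0 + 1 + ⋯ + n)`. The same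
triangularity shows, since `g' ≠ 0`, that a zero of order `m ≤ n + 1` of `h ∘ g` at `x` is a zero
of order `m` of `h` at `g x`; as `g` is injective, the zero count of a combination of the
`F i ∘ g` is bounded by that of the same combination of the `F i`. -/

/-- The coefficient of `h⁽ʲ⁾ ∘ g` in `(h ∘ g)⁽ᵏ⁾` (derivatives within `s`); the recursion is the
product and chain rule applied to `faaDiBrunoCoeff s g k j * h⁽ʲ⁾ ∘ g`. -/
noncomputable def faaDiBrunoCoeff (s : Set ℝ) (g : ℝ → ℝ) : ℕ → ℕ → ℝ → ℝ
  | 0, 0 => fun _ => 1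
  | 0, _ + 1 => fun _ => 0
  | k + 1, 0 => derivWithin (faaDiBrunoCoeff s g k 0) s
  | k + 1, j + 1 => fun x =>
      derivWithin (faaDiBrunoCoeff s g k (j + 1)) s x +
        faaDiBrunoCoeff s g k j x * derivWithin g s x

section FaaDiBruno

variable {s t : Set ℝ} {g h : ℝ → ℝ}

theorem derivWithin_eq_zero_of_eqOn_zero {f : ℝ → ℝ} (hf : EqOn f 0 s) {x : ℝ} (hx : x ∈ s) :
    derivWithin f s x = 0 := by
  rw [derivWithin_congr hf (hf hx)]
  exact congrFun (derivWithin_const s 0) x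

theorem eqOn_faaDiBrunoCoeff_zero_of_lt {k j : ℕ} (hkj : k < j) :
    EqOn (faaDiBrunoCoeff s g k j) 0 s := by
  induction k generalizing j with
  | zero =>
    obtain ⟨j, rfl⟩ := Nat.exists_eq_add_of_lt hkj
    exact fun _ _ => rfl
  | succ k ih =>
    cases j with
    | zero => omega
    | succ j =>
      intro x hx
      simp only [faaDiBrunoCoeff, derivWithin_eq_zero_of_eqOn_zero (ih (j := j + 1) (by omega)) hx,
        ih (Nat.lt_of_succ_lt_succ hkj) hx, Pi.zero_apply, zero_mul, add_zero]

theorem faaDiBrunoCoeff_self (k : ℕ) {x : ℝ} (hx : x ∈ s) :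
    faaDiBrunoCoeff s g k k x = derivWithin g s x ^ k := by
  induction k with
  | zero => rfl
  | succ k ih =>
    simp only [faaDiBrunoCoeff, derivWithin_eq_zero_of_eqOn_zero
      (eqOn_faaDiBrunoCoeff_zero_of_lt k.lt_succ_self) hx, ih, zero_add, pow_succ]

theorem contDiffOn_faaDiBrunoCoeff {n : ℕ} (hs : UniqueDiffOn ℝ s) (hg : ContDiffOn ℝ n g s)
    {k : ℕ} (hk : k ≤ n) (j : ℕ) : ContDiffOn ℝ (n - k : ℕ) (faaDiBrunoCoeff s g k j) s := by
  induction k generalizing j with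
  | zero => cases j <;> exact contDiffOn_const
  | succ k ih =>
    have hderiv : ∀ i, ContDiffOn ℝ (n - (k + 1) : ℕ) (derivWithin (faaDiBrunoCoeff s g k i) s) s :=
      fun i => (ih (by omega) i).derivWithin hs (by norm_cast; omega)
    cases j with
    | zero => exact hderiv 0
    | succ j =>
      exact (hderiv (j + 1)).add (((ih (by omega) j).of_le (by norm_cast; omega)).mul
        (hg.derivWithin hs (by norm_cast; omega)))

theorem sum_range_faaDiBrunoCoeff_succ {k : ℕ} {x : ℝ} (hx : x ∈ s) (u : ℕ → ℝ) :
    ∑ j ∈ Finset.range (k + 2), faaDiBrunoCoeff s g (k + 1) j x * u j =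
      ∑ j ∈ Finset.range (k + 1), (derivWithin (faaDiBrunoCoeff s g k j) s x * u j +
        faaDiBrunoCoeff s g k j x * derivWithin g s x * u (j + 1)) := by
  have hshift : ∑ j ∈ Finset.range (k + 1),
        derivWithin (faaDiBrunoCoeff s g k (j + 1)) s x * u (j + 1) +
        derivWithin (faaDiBrunoCoeff s g k 0) s x * u 0 =
      ∑ j ∈ Finset.range (k + 1), derivWithin (faaDiBrunoCoeff s g k j) s x * u j := by
    rw [← Finset.sum_range_succ' (fun j => derivWithin (faaDiBrunoCoeff s g k j) s x * u j),
      Finset.sum_range_succ, derivWithin_eq_zero_of_eqOn_zero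
        (eqOn_faaDiBrunoCoeff_zero_of_lt k.lt_succ_self) hx, zero_mul, add_zero]
  rw [Finset.sum_range_succ', Finset.sum_add_distrib, ← hshift]
  simp only [faaDiBrunoCoeff, add_mul, Finset.sum_add_distrib]
  ring

theorem iteratedDerivWithin_comp_eq_sum {n : ℕ} (hs : UniqueDiffOn ℝ s) (ht : UniqueDiffOn ℝ t)
    (hg : ContDiffOn ℝ n g s) (hmap : MapsTo g s t) (hh : ContDiffOn ℝ n h t) {k : ℕ}
    (hk : k ≤ n) {x : ℝ} (hx : x ∈ s) :
    iteratedDerivWithin k (h ∘ g) s x =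
      ∑ j ∈ Finset.range (k + 1), faaDiBrunoCoeff s g k j x * iteratedDerivWithin j h t (g x) := by
  induction k generalizing x with
  | zero => simp [faaDiBrunoCoeff]
  | succ k ih =>
    have hg_deriv : HasDerivWithinAt g (derivWithin g s x) s x :=
      ((hg x hx).differentiableWithinAt (by norm_cast; omega)).hasDerivWithinAt
    have hterm : ∀ j ∈ Finset.range (k + 1), HasDerivWithinAt
        (fun y => faaDiBrunoCoeff s g k j y * iteratedDerivWithin j h t (g y))
        (derivWithin (faaDiBrunoCoeff s g k j) s x * iteratedDerivWithin j h t (g x) +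
          faaDiBrunoCoeff s g k j x * derivWithin g s x *
            iteratedDerivWithin (j + 1) h t (g x)) s x := by
      intro j hj
      have hjk : j ≤ k := Nat.lt_succ_iff.mp (Finset.mem_range.mp hj)
      have hcoeff := ((contDiffOn_faaDiBrunoCoeff hs hg (k := k) (by omega) j).differentiableOn
        (by norm_cast; omega) x hx).hasDerivWithinAt
      have hiter : HasDerivWithinAt (iteratedDerivWithin j h t)
          (iteratedDerivWithin (j + 1) h t (g x)) t (g x) := by
        rw [iteratedDerivWithin_succ]
        exact (hh.differentiableOn_iteratedDerivWithin (by norm_cast; omega) ht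
          (g x) (hmap hx)).hasDerivWithinAt
      exact (hcoeff.mul (hiter.comp x hg_deriv hmap)).congr_deriv
        (by rw [Function.comp_apply]; ring)
    calc iteratedDerivWithin (k + 1) (h ∘ g) s x
        = derivWithin (fun y => ∑ j ∈ Finset.range (k + 1),
            faaDiBrunoCoeff s g k j y * iteratedDerivWithin j h t (g y)) s x := by
          rw [iteratedDerivWithin_succ]
          exact derivWithin_congr (fun y hy => ih (by omega) hy) (ih (by omega) hx)
      _ = _ := (HasDerivWithinAt.fun_sum hterm).derivWithin (hs x hx)
      _ = _ := (sum_range_faaDiBrunoCoeff_succ hx _).symm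

theorem iteratedDerivWithin_eq_zero_of_comp {n : ℕ} (hs : UniqueDiffOn ℝ s)
    (ht : UniqueDiffOn ℝ t) (hg : ContDiffOn ℝ n g s) (hmap : MapsTo g s t)
    (hh : ContDiffOn ℝ n h t) {x : ℝ} (hx : x ∈ s) (hg' : derivWithin g s x ≠ 0) {k : ℕ}
    (hk : k ≤ n) (hvanish : ∀ i ≤ k, iteratedDerivWithin i (h ∘ g) s x = 0) :
    iteratedDerivWithin k h t (g x) = 0 := by
  induction k using Nat.strong_induction_on with
  | _ k ih =>
    have hlower : ∀ j ∈ Finset.range k,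
        faaDiBrunoCoeff s g k j x * iteratedDerivWithin j h t (g x) = 0 := fun j hj => by
      have hjk := Finset.mem_range.mp hj
      rw [ih j hjk (by omega) fun i hi => hvanish i (by omega), mul_zero]
    have hk_vanish := hvanish k le_rfl
    rw [iteratedDerivWithin_comp_eq_sum hs ht hg hmap hh hk hx, Finset.sum_range_succ,
      Finset.sum_eq_zero hlower, zero_add, faaDiBrunoCoeff_self k hx] at hk_vanish
    exact (mul_eq_zero.mp hk_vanish).resolve_left (pow_ne_zero k hg')

theorem iteratedDerivWithin_comp_eq_sum_fin {n : ℕ} (hs : UniqueDiffOn ℝ s)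
    (ht : UniqueDiffOn ℝ t) (hg : ContDiffOn ℝ n g s) (hmap : MapsTo g s t)
    (hh : ContDiffOn ℝ n h t) (k : Fin (n + 1)) {x : ℝ} (hx : x ∈ s) :
    iteratedDerivWithin k (h ∘ g) s x =
      ∑ j : Fin (n + 1), iteratedDerivWithin j h t (g x) * faaDiBrunoCoeff s g k j x := by
  rw [iteratedDerivWithin_comp_eq_sum hs ht hg hmap hh k.is_le hx,
    Fin.sum_univ_eq_sum_range
      (fun j => iteratedDerivWithin j h t (g x) * faaDiBrunoCoeff s g k j x)]
  refine Finset.sum_subset_zero_on_sdiff (Finset.range_subset_range.mpr k.is_lt) ?_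
    fun j _ => mul_comm _ _
  intro j hj
  rw [Finset.mem_sdiff, Finset.mem_range, Finset.mem_range, not_lt] at hj
  rw [eqOn_faaDiBrunoCoeff_zero_of_lt hj.2 hx, Pi.zero_apply, mul_zero]

theorem det_faaDiBrunoCoeff (n : ℕ) {x : ℝ} (hx : x ∈ s) :
    (Matrix.of fun j k : Fin (n + 1) => faaDiBrunoCoeff s g k j x).det =
      derivWithin g s x ^ (n * (n + 1) / 2) := by
  have htriangular :
      (Matrix.of fun j k : Fin (n + 1) => faaDiBrunoCoeff s g k j x).IsUpperTriangular :=
    fun j k hkj => eqOn_faaDiBrunoCoeff_zero_of_lt hkj hx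
  rw [Matrix.det_of_isUpperTriangular htriangular]
  simp only [Matrix.of_apply, faaDiBrunoCoeff_self _ hx, Finset.prod_pow_eq_pow_sum,
    Fin.sum_univ_eq_sum_range (fun i => i) (n + 1), Finset.sum_range_id, Nat.add_sub_cancel,
    Nat.mul_comm]

end FaaDiBruno

theorem Wr_comp {n : ℕ} {a b c d : ℝ} (hab : a < b) (hcd : c < d) {F : Fin (n + 1) → ℝ → ℝ}
    (hF : ∀ i, ContDiffOn ℝ n (F i) (Icc c d)) {g : ℝ → ℝ} (hg : ContDiffOn ℝ n g (Icc a b))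
    (hmap : MapsTo g (Icc a b) (Icc c d)) {x : ℝ} (hx : x ∈ Icc a b) :
    Wr n a b (fun i => F i ∘ g) x =
      derivWithin g (Icc a b) x ^ (n * (n + 1) / 2) * Wr n c d F (g x) := by
  have hmul : (Matrix.of fun i k : Fin (n + 1) => iteratedDerivWithin k (F i ∘ g) (Icc a b) x) =
      (Matrix.of fun i j : Fin (n + 1) => iteratedDerivWithin j (F i) (Icc c d) (g x)) *
        Matrix.of fun j k : Fin (n + 1) => faaDiBrunoCoeff (Icc a b) g k j x := by
    ext i k
    exact iteratedDerivWithin_comp_eq_sum_fin (uniqueDiffOn_Icc hab) (uniqueDiffOn_Icc hcd) hg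
      hmap (hF i) k hx
  rw [Wr, Wr, hmul, Matrix.det_mul, det_faaDiBrunoCoeff n hx, mul_comm]

theorem zerosLE_of_forall_le_succ {a b : ℝ} {f : ℝ → ℝ} {N : ℕ}
    (h : ∀ z : Finset ℝ, ↑z ⊆ Icc a b → ∀ m : ℝ → ℕ, (∀ x ∈ z, m x ≤ N + 1) →
      (∀ x ∈ z, ∀ k < m x, iteratedDerivWithin k f (Icc a b) x = 0) → ∑ x ∈ z, m x ≤ N) :
    ZerosLE a b f N := by
  intro z hz m hvanish
  have hcapped := h z hz (fun x => min (m x) (N + 1)) (fun x _ => min_le_right _ _)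
    fun x hx k hk => hvanish x hx k (lt_of_lt_of_le hk (min_le_left _ _))
  have hcap_eq : ∀ x ∈ z, min (m x) (N + 1) = m x := fun x hx => by
    have := (Finset.single_le_sum (fun y _ => Nat.zero_le (min (m y) (N + 1))) hx).trans hcapped
    omega
  rwa [Finset.sum_congr rfl hcap_eq] at hcapped

theorem ZerosLE.comp {a b c d : ℝ} (hab : a < b) (hcd : c < d) {f g : ℝ → ℝ} {N : ℕ}
    (hzeros : ZerosLE c d f N) (hf : ContDiffOn ℝ N f (Icc c d))
    (hg : ContDiffOn ℝ N g (Icc a b)) (hmap : MapsTo g (Icc a b) (Icc c d))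
    (hinj : InjOn g (Icc a b)) (hg' : ∀ x ∈ Icc a b, derivWithin g (Icc a b) x ≠ 0) :
    ZerosLE a b (f ∘ g) N := by
  -- Vanishing only transfers for derivatives of order `≤ N`, hence the capped multiplicities.
  refine zerosLE_of_forall_le_succ fun z hz m hm hvanish => ?_
  classical
  set m' : ℝ → ℕ := m ∘ Function.invFunOn g (Icc a b)
  have hm' : ∀ x ∈ z, m' (g x) = m x := fun x hx =>
    congrArg m (hinj.leftInvOn_invFunOn (hz hx))
  have hvanish' : ∀ y ∈ z.image g, ∀ k < m' y, iteratedDerivWithin k f (Icc c d) y = 0 := by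
    intro y hy k hk
    obtain ⟨x, hx, rfl⟩ := Finset.mem_image.mp hy
    rw [hm' x hx] at hk
    exact iteratedDerivWithin_eq_zero_of_comp (uniqueDiffOn_Icc hab) (uniqueDiffOn_Icc hcd) hg
      hmap hf (hz hx) (hg' x (hz hx)) (by have := hm x hx; omega)
      fun i hi => hvanish x hx i (by omega)
  calc ∑ x ∈ z, m x = ∑ y ∈ z.image g, m' y := by
        rw [Finset.sum_image (hinj.mono hz)]
        exact (Finset.sum_congr rfl hm').symm
    _ ≤ N := hzeros _ (by rw [Finset.coe_image]; exact (hmap.mono_left hz).image_subset) m'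
        hvanish'

theorem IsETSystem.comp {n : ℕ} {a b c d : ℝ} (hab : a < b) (hcd : c < d)
    {F : Fin (n + 1) → ℝ → ℝ} (hF : IsETSystem n c d F) {g : ℝ → ℝ}
    (hg : ContDiffOn ℝ n g (Icc a b)) (hmap : MapsTo g (Icc a b) (Icc c d))
    (hinj : InjOn g (Icc a b)) (hg' : ∀ x ∈ Icc a b, derivWithin g (Icc a b) x ≠ 0) :
    IsETSystem n a b (fun i => F i ∘ g) :=
  ⟨fun i => (hF.1 i).comp hg hmap, fun coeffs hcoeffs =>
    (hF.2 coeffs hcoeffs).comp hab hcd (ContDiffOn.sum fun i _ => contDiffOn_const.mul (hF.1 i))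
      hg hmap hinj hg'⟩

theorem strictMonoOn_of_derivWithin_pos {D : Set ℝ} (hD : Convex ℝ D) {f : ℝ → ℝ}
    (hf' : ∀ x ∈ D, 0 < derivWithin f D x) : StrictMonoOn f D :=
  strictMonoOn_of_deriv_pos hD
    (fun x hx => (differentiableWithinAt_of_derivWithin_ne_zero (hf' x hx).ne').continuousWithinAt)
    fun x hx => by
      rw [← derivWithin_of_mem_nhds (mem_interior_iff_mem_nhds.mp hx)]
      exact hf' x (interior_subset hx)

theorem stmt12 (n : ℕ) (a b c d : ℝ) (hab : a < b) (hcd : c < d)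
    (F : Fin (n + 1) → ℝ → ℝ) (hF : IsETSystem n c d F)
    (g : ℝ → ℝ) (hg : ContDiffOn ℝ n g (Set.Icc a b))
    (hmap : ∀ x ∈ Set.Icc a b, g x ∈ Set.Icc c d)
    (hg' : ∀ x ∈ Set.Icc a b, 0 < derivWithin g (Set.Icc a b) x) :
    IsETSystem n a b (fun i => F i ∘ g) ∧
      ∀ x ∈ Set.Icc a b,
        Wr n a b (fun i => F i ∘ g) x =
          derivWithin g (Set.Icc a b) x ^ (n * (n + 1) / 2) * Wr n c d F (g x) :=
  ⟨hF.comp hab hcd hg hmap (strictMonoOn_of_derivWithin_pos (convex_Icc a b) hg').injOn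
      fun x hx => (hg' x hx).ne',
    fun _ hx => Wr_comp hab hcd hF.1 hg hmap hx⟩
end

section
/- (Lukács–Markov) Let p ∈ ℝ[x] with p ≥ 0 on [a,b] where a < b. (i) If deg p = 2m then there exist f, g ∈ ℝ[x] with deg f ≤ m and deg g ≤ m-1 such that p(x) = f(x)² + (x-a)(b-x)·g(x)². (ii) If deg p = 2m+1 then there exist f, g ∈ ℝ[x] with deg f ≤ m and deg g ≤ m such that p(x) = (x-a)·f(x)² + (b-x)·g(x)². -/
/-!
Polynomials with either representation are closed under multiplication, the index adding up as
the degree does (Brahmagupta-type identities such as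
`(f₁² + w g₁²)(f₂² + w g₂²) = (f₁f₂ + w g₁g₂)² + w (f₁g₂ - g₁f₂)²` for `w = (x - a)(b - x)`).
A polynomial nonnegative on `[a, b]` splits off a factor that is represented directly: `x - r`
for a zero `r ≤ a`, `r - x` for a zero `r ≥ b`, `(x - r)²` for a zero inside `(a, b)` (a local
minimum, hence a double zero), or a real quadratic without real zeros. The cofactor is again
nonnegative on `[a, b]`, so induction on the degree finishes the proof.
-/

open Polynomial Set

namespace Polynomial

section Semiring

variable {R : Type*} [Semiring R] {m n : ℕ}

lemma natDegree_mul_le_of_degree_lt {ℓ g : R[X]} (hℓ : ℓ.natDegree ≤ 1) (hg : g.degree < m) :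
    (ℓ * g).natDegree ≤ m := by
  rcases eq_or_ne g 0 with rfl | hg0
  · simp
  have := (natDegree_lt_iff_degree_lt hg0).2 hg
  exact (natDegree_mul_le_of_le hℓ le_rfl).trans (by omega)

lemma degree_mul_lt_of_natDegree_le_of_degree_lt {f g : R[X]} (hf : f.natDegree ≤ m)
    (hg : g.degree < n) : (f * g).degree < ↑(m + n) := by
  rcases eq_or_ne g 0 with rfl | hg0
  · simp
  have := (natDegree_lt_iff_degree_lt hg0).2 hg
  have hfg : (f * g).natDegree < m + n := (natDegree_mul_le_of_le hf le_rfl).trans_lt (by omega)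
  exact degree_le_natDegree.trans_lt (WithBot.coe_lt_coe.2 hfg)

end Semiring

lemma natDegree_C_sub_X_le {R : Type*} [Ring R] (r : R) : (C r - X).natDegree ≤ 1 := by
  compute_degree

end Polynomial

variable {a b : ℝ}

/-- `g.degree < m` rather than `g.natDegree ≤ m - 1`: for `m = 0` it forces `g = 0`. -/
def HasEvenRep (a b : ℝ) (m : ℕ) (p : ℝ[X]) : Prop :=
  ∃ f g : ℝ[X], f.natDegree ≤ m ∧ g.degree < m ∧
    p = f ^ 2 + (X - C a) * (C b - X) * g ^ 2

def HasOddRep (a b : ℝ) (m : ℕ) (p : ℝ[X]) : Prop :=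
  ∃ f g : ℝ[X], f.natDegree ≤ m ∧ g.natDegree ≤ m ∧
    p = (X - C a) * f ^ 2 + (C b - X) * g ^ 2

section Mul

variable {m₁ m₂ : ℕ} {p q : ℝ[X]}

lemma HasEvenRep.mul (hp : HasEvenRep a b m₁ p) (hq : HasEvenRep a b m₂ q) :
    HasEvenRep a b (m₁ + m₂) (p * q) := by
  obtain ⟨f₁, g₁, hf₁, hg₁, rfl⟩ := hp
  obtain ⟨f₂, g₂, hf₂, hg₂, rfl⟩ := hq
  refine ⟨f₁ * f₂ + (X - C a) * g₁ * ((C b - X) * g₂), f₁ * g₂ - g₁ * f₂, ?_, ?_, by ring⟩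
  · exact natDegree_add_le_of_degree_le (natDegree_mul_le_of_le hf₁ hf₂) <|
      natDegree_mul_le_of_le (natDegree_mul_le_of_degree_lt (natDegree_X_sub_C_le a) hg₁)
        (natDegree_mul_le_of_degree_lt (natDegree_C_sub_X_le b) hg₂)
  · refine (degree_sub_le _ _).trans_lt (max_lt ?_ ?_)
    · exact degree_mul_lt_of_natDegree_le_of_degree_lt hf₁ hg₂
    · rw [mul_comm, add_comm]
      exact degree_mul_lt_of_natDegree_le_of_degree_lt hf₂ hg₁

lemma HasEvenRep.mul_hasOddRep (hp : HasEvenRep a b m₁ p) (hq : HasOddRep a b m₂ q) :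
    HasOddRep a b (m₁ + m₂) (p * q) := by
  obtain ⟨f₁, g₁, hf₁, hg₁, rfl⟩ := hp
  obtain ⟨f₂, g₂, hf₂, hg₂, rfl⟩ := hq
  refine ⟨f₁ * f₂ + (C b - X) * g₁ * g₂, f₁ * g₂ - (X - C a) * g₁ * f₂, ?_, ?_, by ring⟩
  · exact natDegree_add_le_of_degree_le (natDegree_mul_le_of_le hf₁ hf₂) <|
      natDegree_mul_le_of_le (natDegree_mul_le_of_degree_lt (natDegree_C_sub_X_le b) hg₁) hg₂
  · exact (natDegree_sub_le_of_le (natDegree_mul_le_of_le hf₁ hg₂)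
      (natDegree_mul_le_of_le (natDegree_mul_le_of_degree_lt (natDegree_X_sub_C_le a) hg₁)
        hf₂)).trans (max_self _).le

lemma HasOddRep.mul (hp : HasOddRep a b m₁ p) (hq : HasOddRep a b m₂ q) :
    HasEvenRep a b (m₁ + m₂ + 1) (p * q) := by
  obtain ⟨f₁, g₁, hf₁, hg₁, rfl⟩ := hp
  obtain ⟨f₂, g₂, hf₂, hg₂, rfl⟩ := hq
  refine ⟨(X - C a) * (f₁ * f₂) + (C b - X) * (g₁ * g₂), f₁ * g₂ - g₁ * f₂, ?_, ?_, by ring⟩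
  · exact natDegree_add_le_of_degree_le
      ((natDegree_mul_le_of_le (natDegree_X_sub_C_le a) (natDegree_mul_le_of_le hf₁ hf₂)).trans_eq
        (add_comm _ _))
      ((natDegree_mul_le_of_le (natDegree_C_sub_X_le b) (natDegree_mul_le_of_le hg₁ hg₂)).trans_eq
        (add_comm _ _))
  · refine (degree_le_of_natDegree_le ?_).trans_lt (WithBot.coe_lt_coe.2 (Nat.lt_succ_self _))
    exact (natDegree_sub_le_of_le (natDegree_mul_le_of_le hf₁ hg₂)
      (natDegree_mul_le_of_le hg₁ hf₂)).trans (max_self _).le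

def HasLukacsRep (a b : ℝ) (p : ℝ[X]) : Prop :=
  ∃ m, (p.natDegree = 2 * m ∧ HasEvenRep a b m p) ∨ (p.natDegree = 2 * m + 1 ∧ HasOddRep a b m p)

lemma HasLukacsRep.mul (hp : HasLukacsRep a b p) (hq : HasLukacsRep a b q)
    (hp0 : p ≠ 0) (hq0 : q ≠ 0) : HasLukacsRep a b (p * q) := by
  have hdeg := natDegree_mul hp0 hq0
  obtain ⟨i, ⟨hi, hp⟩ | ⟨hi, hp⟩⟩ := hp <;> obtain ⟨j, ⟨hj, hq⟩ | ⟨hj, hq⟩⟩ := hq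
  · exact ⟨i + j, .inl ⟨by omega, hp.mul hq⟩⟩
  · exact ⟨i + j, .inr ⟨by omega, hp.mul_hasOddRep hq⟩⟩
  · exact ⟨j + i, .inr ⟨by omega, mul_comm p q ▸ hq.mul_hasOddRep hp⟩⟩
  · exact ⟨i + j + 1, .inl ⟨by omega, hp.mul hq⟩⟩

end Mul

lemma hasLukacsRep_C {c : ℝ} (hc : 0 ≤ c) : HasLukacsRep a b (C c) :=
  ⟨0, .inl ⟨natDegree_C c, C √c, 0, by simp, by simp,
    by rw [← C_pow, Real.sq_sqrt hc]; ring⟩⟩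

lemma hasLukacsRep_X_sub_C_sq (r : ℝ) : HasLukacsRep a b ((X - C r) ^ 2) :=
  ⟨1, .inl ⟨by simp, X - C r, 0, natDegree_X_sub_C_le r, by simp, by ring⟩⟩

/-- Interpolation at `a` and `b`: `p = (X - a) p(b) / (b - a) + (b - X) p(a) / (b - a)`. -/
lemma hasLukacsRep_of_natDegree_eq_one (hab : a < b) {p : ℝ[X]} (hp : p.natDegree = 1)
    (ha : 0 ≤ p.eval a) (hb : 0 ≤ p.eval b) : HasLukacsRep a b p := by
  have hba : 0 < b - a := sub_pos.2 hab
  refine ⟨0, .inr ⟨hp, C √(p.eval b / (b - a)), C √(p.eval a / (b - a)), by simp, by simp, ?_⟩⟩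
  rw [← C_pow, ← C_pow, Real.sq_sqrt (div_nonneg hb hba.le), Real.sq_sqrt (div_nonneg ha hba.le),
    eq_X_add_C_of_natDegree_le_one hp.le]
  refine Polynomial.funext fun x => ?_
  simp only [eval_add, eval_mul, eval_C, eval_X, eval_sub]
  field_simp
  ring

lemma exists_nonneg_quadratic_eq_zero {A B C : ℝ} (hA : 0 < A) (hC : C ≤ 0) :
    ∃ u, 0 ≤ u ∧ A * u ^ 2 + B * u + C = 0 := by
  have hD : B ^ 2 ≤ B ^ 2 - 4 * A * C := by nlinarith
  have hsqrt := Real.sq_sqrt ((sq_nonneg B).trans hD)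
  have hB := (le_abs_self B).trans (Real.abs_le_sqrt hD)
  set S := √(B ^ 2 - 4 * A * C)
  refine ⟨(-B + S) / (2 * A), div_nonneg (by linarith) (by positivity), ?_⟩
  field_simp
  linear_combination hsqrt

/-- The witness `u` makes `X² - sX + t - u (X - a)(b - X)` a perfect square: it is a root of
the discriminant, a quadratic in `u` with leading coefficient `(a - b)²` and value `s² - 4t < 0`
at `0`. -/
lemma hasLukacsRep_X_sq_sub_C_mul_X_add_C (hab : a < b) {s t : ℝ} (hst : s ^ 2 < 4 * t) :
    HasLukacsRep a b (X ^ 2 - C s * X + C t) := by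
  obtain ⟨u, hu, hdisc⟩ := exists_nonneg_quadratic_eq_zero
    (B := 2 * s * (a + b) - 4 * a * b - 4 * t) (by nlinarith : 0 < (a - b) ^ 2)
    (by linarith : s ^ 2 - 4 * t ≤ 0)
  have hα := Real.sq_sqrt (by linarith : 0 ≤ 1 + u)
  obtain ⟨β, hαβ⟩ : ∃ β, 2 * √(1 + u) * β = -(s + (a + b) * u) :=
    ⟨_, mul_div_cancel₀ _ (by positivity)⟩
  have hβ : β ^ 2 = t + a * b * u := by
    apply mul_left_cancel₀ (by positivity : 4 * (1 + u) ≠ 0)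
    linear_combination (2 * √(1 + u) * β - (s + (a + b) * u)) * hαβ - 4 * β ^ 2 * hα + hdisc
  refine ⟨1, .inl ⟨by compute_degree!, C √(1 + u) * X + C β, C √u, by compute_degree,
    degree_C_le.trans_lt (by norm_num), ?_⟩⟩
  refine Polynomial.funext fun x => ?_
  simp only [eval_add, eval_mul, eval_sub, eval_pow, eval_C, eval_X]
  linear_combination (-x ^ 2) * hα - x * hαβ - hβ - (x - a) * (b - x) * Real.sq_sqrt hu

/-- `r` lies in the closure of `Ioo a b \ {r}`, so continuity of `h` extends the sign to `r`. -/
lemma eval_nonneg_of_eval_mul_nonneg (hab : a < b) {q h : ℝ[X]} {r : ℝ}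
    (hq : ∀ x ∈ Icc a b, x ≠ r → 0 < q.eval x) (hqh : ∀ x ∈ Icc a b, 0 ≤ (q * h).eval x) :
    ∀ x ∈ Icc a b, 0 ≤ h.eval x := by
  have hoff : ∀ x ∈ Ioo a b ∩ {r}ᶜ, 0 ≤ h.eval x := fun x ⟨hx, hxr⟩ => by
    have := hqh x (Ioo_subset_Icc_self hx)
    rw [eval_mul] at this
    exact nonneg_of_mul_nonneg_right this (hq x (Ioo_subset_Icc_self hx) hxr)
  have hdense : Icc a b ⊆ closure (Ioo a b ∩ {r}ᶜ) := by
    rw [← closure_Ioo hab.ne]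
    exact closure_minimal ((dense_compl_singleton r).open_subset_closure_inter isOpen_Ioo)
      isClosed_closure
  exact fun x hx => closure_minimal hoff (isClosed_le continuous_const h.continuous) (hdense hx)

/-- An interior zero of a polynomial that is nonnegative on `[a, b]` is a local minimum,
so the derivative vanishes there too. -/
lemma sq_dvd_of_isRoot_of_nonneg {p : ℝ[X]} (hp0 : p ≠ 0) (hp : ∀ x ∈ Icc a b, 0 ≤ p.eval x)
    {r : ℝ} (hr : p.IsRoot r) (har : a < r) (hrb : r < b) : (X - C r) ^ 2 ∣ p := by
  have hmin : IsLocalMin (fun x => p.eval x) r :=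
    Filter.mem_of_superset (Icc_mem_nhds har hrb) fun x hx => by
      simpa [hr.eq_zero] using hp x hx
  have hder : p.derivative.IsRoot r := by
    rw [IsRoot, ← Polynomial.deriv]
    exact hmin.deriv_eq_zero
  exact (le_rootMultiplicity_iff hp0).1 ((one_lt_rootMultiplicity_iff_isRoot hp0).2 ⟨hr, hder⟩)

lemma exists_hasLukacsRep_dvd_of_isRoot (hab : a < b) {p : ℝ[X]} (hp0 : p ≠ 0)
    (hp : ∀ x ∈ Icc a b, 0 ≤ p.eval x) {r : ℝ} (hr : p.IsRoot r) :
    ∃ q h : ℝ[X], p = q * h ∧ 0 < q.natDegree ∧ HasLukacsRep a b q ∧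
      ∀ x ∈ Icc a b, 0 ≤ h.eval x := by
  obtain ⟨h, rfl⟩ := dvd_iff_isRoot.2 hr
  rcases le_or_gt r a with hra | har
  · have hb : 0 ≤ (X - C r).eval b := by simp only [eval_sub, eval_X, eval_C]; linarith
    refine ⟨X - C r, h, rfl, by simp, hasLukacsRep_of_natDegree_eq_one hab (natDegree_X_sub_C r)
      (by simpa using hra) hb, eval_nonneg_of_eval_mul_nonneg hab (r := r) ?_ hp⟩
    intro x hx hxr
    simpa using lt_of_le_of_ne (hra.trans hx.1) (Ne.symm hxr)
  rcases le_or_gt b r with hbr | hrb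
  · have hneg : (X - C r) * h = (C r - X) * -h := by ring
    have hdeg : (C r - X).natDegree = 1 := by compute_degree!
    rw [hneg] at hp ⊢
    have ha : 0 ≤ (C r - X).eval a := by simp only [eval_sub, eval_X, eval_C]; linarith
    refine ⟨C r - X, -h, rfl, by omega, hasLukacsRep_of_natDegree_eq_one hab hdeg ha
      (by simpa using hbr), eval_nonneg_of_eval_mul_nonneg hab (r := r) ?_ hp⟩
    intro x hx hxr
    simpa using lt_of_le_of_ne (hx.2.trans hbr) hxr
  obtain ⟨k, hk⟩ := sq_dvd_of_isRoot_of_nonneg hp0 hp hr har hrb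
  rw [hk] at hp ⊢
  refine ⟨(X - C r) ^ 2, k, rfl, by simp, hasLukacsRep_X_sub_C_sq r,
    eval_nonneg_of_eval_mul_nonneg hab (r := r) ?_ hp⟩
  intro x _ hxr
  simpa using sq_pos_of_ne_zero (sub_ne_zero.2 hxr)

lemma exists_hasLukacsRep_dvd_of_forall_not_isRoot (hab : a < b) {p : ℝ[X]}
    (hdeg : 0 < p.natDegree) (hp : ∀ x ∈ Icc a b, 0 ≤ p.eval x) (hroot : ∀ r, ¬p.IsRoot r) :
    ∃ q h : ℝ[X], p = q * h ∧ 0 < q.natDegree ∧ HasLukacsRep a b q ∧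
      ∀ x ∈ Icc a b, 0 ≤ h.eval x := by
  obtain ⟨z, hz⟩ := IsAlgClosed.exists_aeval_eq_zero ℂ p (natDegree_pos_iff_degree_pos.1 hdeg).ne'
  have him : z.im ≠ 0 := by
    intro h0
    apply hroot z.re
    rwa [← Complex.re_add_im z, h0, Complex.ofReal_zero, zero_mul, add_zero,
      ← Complex.coe_algebraMap, aeval_algebraMap_apply_eq_algebraMap_eval, map_eq_zero] at hz
  obtain ⟨h, rfl⟩ := p.quadratic_dvd_of_aeval_eq_zero_im_ne_zero hz him
  have hnorm : ‖z‖ ^ 2 = z.re ^ 2 + z.im ^ 2 := by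
    rw [Complex.sq_norm, Complex.normSq_apply]; ring
  have him2 : 0 < z.im ^ 2 := by positivity
  have hq : (X ^ 2 - C (2 * z.re) * X + C (‖z‖ ^ 2)).natDegree = 2 := by compute_degree!
  refine ⟨_, h, rfl, by omega, hasLukacsRep_X_sq_sub_C_mul_X_add_C hab (by nlinarith),
    eval_nonneg_of_eval_mul_nonneg hab (r := a) (fun x _ _ => ?_) hp⟩
  simp only [eval_add, eval_sub, eval_mul, eval_pow, eval_C, eval_X, hnorm]
  nlinarith [sq_nonneg (x - z.re)]

theorem hasLukacsRep_of_nonneg (hab : a < b) {p : ℝ[X]} (hp : ∀ x ∈ Icc a b, 0 ≤ p.eval x) :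
    HasLukacsRep a b p := by
  induction hn : p.natDegree using Nat.strong_induction_on generalizing p with
  | _ n ih =>
  rcases Nat.eq_zero_or_pos n with rfl | hpos
  · rw [eq_C_of_natDegree_eq_zero hn] at hp ⊢
    exact hasLukacsRep_C (by simpa using hp a (left_mem_Icc.2 hab.le))
  have hp0 : p ≠ 0 := by rintro rfl; rw [natDegree_zero] at hn; omega
  obtain ⟨q, h, rfl, hq, hqrep, hh⟩ : ∃ q h : ℝ[X], p = q * h ∧ 0 < q.natDegree ∧
      HasLukacsRep a b q ∧ ∀ x ∈ Icc a b, 0 ≤ h.eval x := by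
    by_cases hroot : ∃ r, p.IsRoot r
    · obtain ⟨r, hr⟩ := hroot
      exact exists_hasLukacsRep_dvd_of_isRoot hab hp0 hp hr
    · exact exists_hasLukacsRep_dvd_of_forall_not_isRoot hab (hn ▸ hpos) hp (not_exists.1 hroot)
  have hq0 : q ≠ 0 := left_ne_zero_of_mul hp0
  have hh0 : h ≠ 0 := right_ne_zero_of_mul hp0
  rw [natDegree_mul hq0 hh0] at hn
  exact hqrep.mul (ih _ (by omega) hh rfl) hq0 hh0

theorem stmt17 (a b : ℝ) (hab : a < b) (p : ℝ[X])
    (hp : ∀ x ∈ Set.Icc a b, 0 ≤ p.eval x) :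
    (∀ m : ℕ, p.natDegree = 2 * m →
      ∃ f g : ℝ[X], f.natDegree ≤ m ∧ g.natDegree ≤ m - 1 ∧
        ∀ x : ℝ, p.eval x = f.eval x ^ 2 + (x - a) * (b - x) * g.eval x ^ 2) ∧
    (∀ m : ℕ, p.natDegree = 2 * m + 1 →
      ∃ f g : ℝ[X], f.natDegree ≤ m ∧ g.natDegree ≤ m ∧
        ∀ x : ℝ, p.eval x = (x - a) * f.eval x ^ 2 + (b - x) * g.eval x ^ 2) := by
  obtain ⟨k, ⟨hk, f, g, hf, hg, hpfg⟩ | ⟨hk, f, g, hf, hg, hpfg⟩⟩ := hasLukacsRep_of_nonneg hab hp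
  · refine ⟨fun m hm => ?_, fun m hm => by omega⟩
    obtain rfl : k = m := by omega
    refine ⟨f, g, hf, ?_, fun x => by simp [hpfg]⟩
    rcases eq_or_ne g 0 with rfl | hg0
    · simp
    · have := (natDegree_lt_iff_degree_lt hg0).2 hg
      omega
  · refine ⟨fun m hm => by omega, fun m hm => ?_⟩
    obtain rfl : k = m := by omega
    exact ⟨f, g, hf, hg, fun x => by simp [hpfg]⟩
end

section
/- (Richter) Let n ≥ 1, let (X, 𝔄) be a measurable space, let f_1,...,f_n : X → ℝ be linearly independent measurable functions, and let μ be a (nonnegative) measure on X such that each f_i is μ-integrable with s_i = ∫_X f_i dμ. Then there exist k ≤ n, pairwise distinct points x_1,...,x_k ∈ X, and positive constants c_1,...,c_k such that s_i = Σ_{j=1}^k c_j f_i(x_j) for all i = 1,...,n; i.e., the finitely atomic measure ν = Σ c_j δ_{x_j} has the same f_i-moments as μ. -/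
/-!
For every set `S` of full measure, the mean `∫ F dμ` of an integrable `F : X → E` lies in the
convex cone generated by `F '' S`. This goes by induction on `dim E`: otherwise a supporting
functional `ℓ ≠ 0` is `≤ 0` on the cone and `≥ 0` at the mean, so `ℓ ∘ F` is nonpositive with
nonnegative integral, hence vanishes a.e., and `F` lives a.e. in the smaller space `ker ℓ`.
Conic Carathéodory then writes the mean as a positive combination of linearly independent
values `F x_j`; for `F = (f_1, …, f_n)` there are at most `n` of them and the `x_j` are distinct.
-/

open MeasureTheory Module

namespace PointedCone

variable {E : Type*} [AddCommGroup E] [Module ℝ E]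

theorem mem_hull_finset_iff {t : Finset E} {x : E} :
    x ∈ hull ℝ (t : Set E) ↔ ∃ c : E → ℝ, (∀ v ∈ t, 0 ≤ c v) ∧ ∑ v ∈ t, c v • v = x := by
  constructor
  · intro hx
    obtain ⟨c, -, rfl⟩ := Submodule.mem_span_finset.1 hx
    exact ⟨fun v => c v, fun v _ => (c v).2, rfl⟩
  · rintro ⟨c, hc, rfl⟩
    exact Submodule.sum_mem _ fun v hv => smul_mem _ (hc v hv) (subset_hull hv)

/-- Shift the coefficients along a linear relation until the first of them vanishes. -/
theorem exists_mem_hull_erase_of_not_linearIndepOn [DecidableEq E] {t : Finset E}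
    (ht : ¬LinearIndepOn ℝ id (t : Set E)) {x : E} (hx : x ∈ hull ℝ (t : Set E)) :
    ∃ y ∈ t, x ∈ hull ℝ (t.erase y : Set E) := by
  obtain ⟨c, hc, rfl⟩ := mem_hull_finset_iff.1 hx
  obtain ⟨g, hg, hgpos⟩ : ∃ g : E → ℝ, ∑ v ∈ t, g v • v = 0 ∧ ∃ v ∈ t, 0 < g v := by
    rw [linearIndepOn_finset_iff] at ht
    push Not at ht
    obtain ⟨g, hg, v, hv, hgv⟩ := ht
    rcases hgv.lt_or_gt with h | h
    · exact ⟨-g, by simpa [neg_smul, Finset.sum_neg_distrib] using hg, v, hv, by simpa using h⟩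
    · exact ⟨g, hg, v, hv, h⟩
  obtain ⟨y, hy, hymin⟩ := (t.filter (0 < g ·)).exists_min_image (fun v => c v / g v)
    (hgpos.imp fun v hv => Finset.mem_filter.2 hv)
  rw [Finset.mem_filter] at hy
  set τ := c y / g y
  refine ⟨y, hy.1, mem_hull_finset_iff.2 ⟨fun v => c v - τ * g v, fun v hv => ?_, ?_⟩⟩
  · have hvt := Finset.mem_of_mem_erase hv
    by_cases hgv : 0 < g v
    · have := (le_div_iff₀ hgv).1 (hymin v (Finset.mem_filter.2 ⟨hvt, hgv⟩))
      linarith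
    · have : 0 ≤ τ := div_nonneg (hc y hy.1) hy.2.le
      nlinarith [hc v hvt]
  · rw [Finset.sum_erase _ (by simp [τ, hy.2.ne'])]
    simp only [sub_smul, mul_smul, Finset.sum_sub_distrib, ← Finset.smul_sum, hg, smul_zero,
      sub_zero]

theorem exists_linearIndepOn_of_mem_hull {s : Set E} {x : E} (hx : x ∈ hull ℝ s) :
    ∃ t : Finset E, ↑t ⊆ s ∧ LinearIndepOn ℝ id (t : Set E) ∧
      ∃ c : E → ℝ, (∀ v ∈ t, 0 < c v) ∧ ∑ v ∈ t, c v • v = x := by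
  classical
  obtain ⟨t, ⟨hts, htx⟩, hmin⟩ := (measure (Finset.card : Finset E → ℕ)).wf.has_min
    {t | ↑t ⊆ s ∧ x ∈ hull ℝ (t : Set E)} (by exact Submodule.mem_span_finite_of_mem_span hx)
  have hli : LinearIndepOn ℝ id (t : Set E) := by
    by_contra hli
    obtain ⟨y, hy, hyx⟩ := exists_mem_hull_erase_of_not_linearIndepOn hli htx
    exact hmin (t.erase y) ⟨(Finset.coe_subset.2 (t.erase_subset y)).trans hts, hyx⟩
      (Finset.card_erase_lt_of_mem hy)
  obtain ⟨c, hc, rfl⟩ := mem_hull_finset_iff.1 htx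
  refine ⟨t.filter (c · ≠ 0), fun v hv => hts (Finset.mem_filter.1 hv).1,
    hli.mono (Finset.coe_subset.2 (t.filter_subset _)), c, fun v hv => ?_, ?_⟩
  · rw [Finset.mem_filter] at hv
    exact (hc v hv.1).lt_of_ne' hv.2
  · exact Finset.sum_filter_of_ne fun v _ h => left_ne_zero_of_smul h

theorem exists_fin_linearIndependent_of_mem_hull {s : Set E} {x : E} (hx : x ∈ hull ℝ s) :
    ∃ (k : ℕ) (w : Fin k → E) (c : Fin k → ℝ), LinearIndependent ℝ w ∧ (∀ j, w j ∈ s) ∧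
      (∀ j, 0 < c j) ∧ ∑ j, c j • w j = x := by
  obtain ⟨t, hts, hli, c, hc, rfl⟩ := exists_linearIndepOn_of_mem_hull hx
  let e := t.equivFin.symm
  refine ⟨t.card, fun j => e j, fun j => c (e j), hli.comp e e.injective, fun j => hts (e j).2,
    fun j => hc _ (e j).2, ?_⟩
  rw [← t.sum_coe_sort]
  exact e.sum_comp fun v : t => c v • (v : E)

end PointedCone

theorem ae_eq_zero_of_ae_nonpos_of_integral_nonneg {X : Type*} [MeasurableSpace X]
    {μ : Measure X} {g : X → ℝ} (hg : Integrable g μ) (hle : g ≤ᵐ[μ] 0)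
    (hg₀ : 0 ≤ ∫ x, g x ∂μ) : g =ᵐ[μ] 0 := by
  have hzero : ∫ x, g x ∂μ = 0 := (integral_nonpos_of_ae hle).antisymm hg₀
  have := (integral_eq_zero_iff_of_nonneg_ae (hle.mono fun x hx => neg_nonneg.2 hx) hg.neg).1
    (by rw [integral_neg, hzero, neg_zero])
  exact this.mono fun x hx => neg_eq_zero.1 hx

section FiniteDimensional

variable {E : Type*} [NormedAddCommGroup E] [NormedSpace ℝ E] [FiniteDimensional ℝ E]

theorem Convex.exists_ne_zero_forall_le_of_notMem_interior {A : Set E} {x : E}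
    (hA : Convex ℝ A) (hAne : A.Nonempty) (hx : x ∉ interior A) :
    ∃ f : StrongDual ℝ E, f ≠ 0 ∧ ∀ a ∈ A, f a ≤ f x := by
  by_cases hint : (interior A).Nonempty
  · exact geometric_hahn_banach_of_nonempty_interior_point hA hx hint
  obtain ⟨a₀, ha₀⟩ := hAne
  have hdir : (affineSpan ℝ A).direction < ⊤ := by
    rw [lt_top_iff_ne_top, Ne, AffineSubspace.direction_eq_top_iff_of_nonempty
      ((affineSpan_nonempty ℝ).2 ⟨a₀, ha₀⟩), ← hA.interior_nonempty_iff_affineSpan_eq_top]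
    exact hint
  obtain ⟨g, hg, hdirg⟩ := Submodule.exists_le_ker_of_lt_top _ hdir
  have hconst : ∀ a ∈ A, g a = g a₀ := fun a ha => by
    have := hdirg (direction_affineSpan ℝ A ▸ vsub_mem_vectorSpan ℝ ha ha₀)
    simpa [sub_eq_zero] using this
  let f := LinearMap.toContinuousLinearMap g
  have hf : f ≠ 0 := by simpa [f] using hg
  rcases le_total (g a₀) (g x) with h | h
  · exact ⟨f, hf, fun a ha => by simp [f, hconst a ha, h]⟩
  · exact ⟨-f, neg_ne_zero.2 hf, fun a ha => by simp [f, hconst a ha, h]⟩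

theorem PointedCone.exists_dual_nonpos_of_notMem {C : PointedCone ℝ E} {x : E} (hx : x ∉ C) :
    ∃ f : StrongDual ℝ E, f ≠ 0 ∧ (∀ y ∈ C, f y ≤ 0) ∧ 0 ≤ f x := by
  obtain ⟨f, hf, hle⟩ := C.convex.exists_ne_zero_forall_le_of_notMem_interior ⟨0, C.zero_mem⟩
    fun h => hx (interior_subset h)
  have hx0 : 0 ≤ f x := by simpa using hle 0 C.zero_mem
  refine ⟨f, hf, fun y hy => ?_, hx0⟩
  by_contra! hy0
  have := hle _ (C.smul_mem (div_nonneg (hx0.trans (le_add_of_nonneg_right zero_le_one))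
    hy0.le) hy)
  rw [map_smul, smul_eq_mul, div_mul_cancel₀ _ hy0.ne'] at this
  linarith

theorem integral_mem_hull_image {X : Type*} [MeasurableSpace X] {μ : Measure X} {F : X → E}
    (hF : Integrable F μ) {S : Set X} (hS : ∀ᵐ x ∂μ, x ∈ S) :
    ∫ x, F x ∂μ ∈ PointedCone.hull ℝ (F '' S) := by
  induction hd : finrank ℝ E using Nat.strong_induction_on generalizing E S with
  | _ d ih =>
  by_contra hmem
  obtain ⟨ℓ, hℓ, hle, hge⟩ := PointedCone.exists_dual_nonpos_of_notMem hmem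
  have hℓF : (fun x => ℓ (F x)) =ᵐ[μ] 0 :=
    ae_eq_zero_of_ae_nonpos_of_integral_nonneg (ℓ.integrable_comp hF)
      (hS.mono fun x hx => hle _ (PointedCone.subset_hull ⟨x, hx, rfl⟩))
      (by rwa [ℓ.integral_comp_comm hF])
  set K := ℓ.ker
  obtain ⟨P, hP⟩ := ℓ.ker_closedComplemented_of_finiteDimensional_range
  have hK : finrank ℝ K < d := hd ▸ Submodule.finrank_lt
    (by simpa [K, LinearMap.ker_eq_top] using ContinuousLinearMap.coe_injective.ne hℓ)
  have hKmem := ih _ hK (F := fun x => P (F x)) (P.integrable_comp hF)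
    (S := S ∩ {x | ℓ (F x) = 0}) (hS.and hℓF) rfl
  apply hmem
  have hint : ∫ x, F x ∂μ = K.subtypeₗᵢ (∫ x, P (F x) ∂μ) := by
    rw [← LinearIsometry.integral_comp_comm]
    refine integral_congr_ae (hℓF.mono fun x hx => ?_)
    simp [hP ⟨F x, hx⟩]
  rw [hint]
  have hhull : PointedCone.hull ℝ ((fun x => P (F x)) '' (S ∩ {x | ℓ (F x) = 0})) ≤
      (PointedCone.hull ℝ (F '' S)).comap K.subtype := by
    refine Submodule.span_le.2 ?_
    rintro _ ⟨x, hx, rfl⟩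
    exact PointedCone.subset_hull ⟨x, hx.1, by simp [hP ⟨F x, hx.2⟩]⟩
  exact PointedCone.mem_comap.1 (hhull hKmem)

theorem exists_linearIndependent_atoms_integral_eq {X : Type*} [MeasurableSpace X]
    {μ : Measure X} {F : X → E} (hF : Integrable F μ) :
    ∃ (k : ℕ) (x : Fin k → X) (c : Fin k → ℝ), LinearIndependent ℝ (F ∘ x) ∧ (∀ j, 0 < c j) ∧
      ∫ t, F t ∂μ = ∑ j, c j • F (x j) := by
  have hmem := integral_mem_hull_image hF (S := Set.univ) (ae_of_all _ fun _ => trivial)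
  rw [Set.image_univ] at hmem
  obtain ⟨k, w, c, hli, hw, hc, hsum⟩ := PointedCone.exists_fin_linearIndependent_of_mem_hull hmem
  choose x hx using hw
  have hFx : F ∘ x = w := funext hx
  exact ⟨k, x, c, hFx ▸ hli, hc, by simp only [← hsum, hx]⟩

end FiniteDimensional

theorem stmt18_general {X : Type*} [MeasurableSpace X] (n : ℕ)
    (f : Fin n → X → ℝ)
    (μ : Measure X) (hint : ∀ i, Integrable (f i) μ) :
    ∃ (k : ℕ) (_ : k ≤ n) (x : Fin k → X) (c : Fin k → ℝ),
      Function.Injective x ∧ (∀ j, 0 < c j) ∧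
      ∀ i, (∫ t, f i t ∂μ) = ∑ j, c j * f i (x j) := by
  obtain ⟨k, x, c, hli, hc, hsum⟩ :=
    exists_linearIndependent_atoms_integral_eq (F := fun t i => f i t) (Integrable.of_eval hint)
  refine ⟨k, by simpa using hli.fintype_card_le_finrank, x, c, hli.injective.of_comp, hc,
    fun i => ?_⟩
  simpa [eval_integral hint] using congrFun hsum i

theorem stmt18 {X : Type*} [MeasurableSpace X] (n : ℕ) (hn : 1 ≤ n)
    (f : Fin n → X → ℝ) (hmeas : ∀ i, Measurable (f i))
    (hli : LinearIndependent ℝ f)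
    (μ : Measure X) (hint : ∀ i, Integrable (f i) μ) :
    ∃ (k : ℕ) (_ : k ≤ n) (x : Fin k → X) (c : Fin k → ℝ),
      Function.Injective x ∧ (∀ j, 0 < c j) ∧
      ∀ i, (∫ t, f i t ∂μ) = ∑ j, c j * f i (x j) :=
  stmt18_general n f μ hint
end

section
/- (Boas) Let s = (s_i)_{i∈ℕ₀} be an arbitrary real sequence. Then there exists a signed measure ν on [0,∞) such that s_i = ∫_0^∞ x^i dν(x) for all i ∈ ℕ₀; that is, every real sequence is a Stieltjes moment sequence of a signed measure. Equivalently, s can be written as the difference v - w of two Stieltjes moment sequences v, w of nonnegative measures supported in [0,∞). -/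
/-!
For each `i` a Vandermonde system gives finitely many atoms on `[0, ∞)` whose moments of order
`< i` vanish and whose `i`-th moment is `1`. Rescaling the atoms by a large factor `t` multiplies
the `j`-th moment by `t ^ (j - i)`, so the absolute moments of order `< i` can be made smaller than
`2⁻¹ ^ i` while the `i`-th moment is any prescribed `c`. Summing such blocks over `i`, the `j`-th
moment only sees the blocks `i ≤ j`, so the leading coefficients `c i` can be solved for
recursively, and the tails converge absolutely for every `j`. The positive and negative parts of
the resulting signed atomic measure are the two measures.
-/

open MeasureTheory Finset

theorem Matrix.exists_sum_mul_pow_eq_of_injective {K : Type*} [Field K] {n : ℕ} {v : Fin n → K}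
    (hv : Function.Injective v) (b : Fin n → K) :
    ∃ w : Fin n → K, ∀ j : Fin n, ∑ k, w k * v k ^ (j : ℕ) = b j := by
  have hunit : IsUnit (vandermonde v).transpose.det := by
    rw [det_transpose, isUnit_iff_ne_zero]
    exact det_vandermonde_ne_zero_iff.2 hv
  obtain ⟨w, hw⟩ := mulVec_surjective_iff_isUnit.2 ((isUnit_iff_isUnit_det _).2 hunit) b
  refine ⟨w, fun j => ?_⟩
  simp only [← hw, mulVec, dotProduct, transpose_apply, vandermonde_apply, mul_comm]

theorem exists_atoms_with_leading_moment (i : ℕ) (c : ℝ) {ε : ℝ} (hε : 0 < ε) :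
    ∃ w v : Fin (i + 1) → ℝ, (∀ k, 0 ≤ v k) ∧ (∀ j < i, ∑ k, w k * v k ^ j = 0) ∧
      ∑ k, w k * v k ^ i = c ∧ ∀ j < i, ∑ k, |w k| * v k ^ j ≤ ε := by
  have hinj : Function.Injective fun k : Fin (i + 1) => (k : ℝ) + 1 := fun k l h =>
    Fin.ext (by simpa using h)
  obtain ⟨u, hu⟩ := Matrix.exists_sum_mul_pow_eq_of_injective hinj
    fun j => if (j : ℕ) = i then 1 else 0
  replace hu : ∀ j ≤ i, ∑ k, u k * ((k : ℝ) + 1) ^ j = if j = i then 1 else 0 :=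
    fun j hj => hu ⟨j, Nat.lt_succ_of_le hj⟩
  set A := ∑ k, |u k| * ((k : ℝ) + 1) ^ i
  set t := 1 + |c| * A / ε
  have ht : 1 ≤ t := le_add_of_nonneg_right (by positivity)
  have ht0 : 0 < t := by linarith
  have hscale : ∀ (a : ℝ) (g : Fin (i + 1) → ℝ) (j : ℕ),
      ∑ k, a * g k / t ^ i * (t * ((k : ℝ) + 1)) ^ j
        = a * t ^ j / t ^ i * ∑ k, g k * ((k : ℝ) + 1) ^ j := fun a g j => by
    rw [mul_sum]
    exact sum_congr rfl fun k _ => by rw [mul_pow]; ring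
  have habs : ∀ k, |c * u k / t ^ i| = |c| * |u k| / t ^ i := fun k => by
    rw [abs_div, abs_mul, abs_of_pos (pow_pos ht0 i)]
  refine ⟨fun k => c * u k / t ^ i, fun k => t * ((k : ℝ) + 1), fun k => by positivity,
    fun j hj => ?_, ?_, fun j hj => ?_⟩
  · rw [hscale, hu j hj.le, if_neg hj.ne, mul_zero]
  · rw [hscale, hu i le_rfl, if_pos rfl, mul_one, mul_div_assoc, div_self (by positivity),
      mul_one]
  · have hpow : t ^ j / t ^ i ≤ 1 / t := by
      rw [div_le_div_iff₀ (by positivity) ht0, ← pow_succ, one_mul]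
      exact pow_le_pow_right₀ ht hj
    have hsum : ∑ k, |u k| * ((k : ℝ) + 1) ^ j ≤ A :=
      sum_le_sum fun k _ => mul_le_mul_of_nonneg_left
        (pow_le_pow_right₀ (le_add_of_nonneg_left k.val.cast_nonneg) hj.le) (abs_nonneg _)
    have hεt : |c| * A ≤ ε * t := by
      rw [mul_add, mul_div_cancel₀ _ hε.ne', mul_one]
      linarith
    simp only [habs, hscale]
    calc |c| * t ^ j / t ^ i * ∑ k, |u k| * ((k : ℝ) + 1) ^ j
        = |c| * (t ^ j / t ^ i) * ∑ k, |u k| * ((k : ℝ) + 1) ^ j := by ring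
      _ ≤ |c| * (1 / t) * A := by gcongr
      _ ≤ ε := by rwa [mul_one_div, div_mul_eq_mul_div, div_le_iff₀ ht0]

noncomputable def triangularSolve {G : Type*} [AddCommGroup G] (F : ℕ → G → ℕ → G)
    (s : ℕ → G) : ℕ → G
  | j => s j - ∑ i : Fin j, F i (triangularSolve F s i) j

theorem sum_triangularSolve {G : Type*} [AddCommGroup G] {F : ℕ → G → ℕ → G}
    (hF : ∀ i c, F i c i = c) (s : ℕ → G) (j : ℕ) :
    ∑ i ∈ range (j + 1), F i (triangularSolve F s i) j = s j := by
  rw [sum_range_succ, hF, triangularSolve, ← Fin.sum_univ_eq_sum_range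
    (fun i => F i (triangularSolve F s i) j), add_sub_cancel]

theorem exists_atoms_hasSum_moments (s : ℕ → ℝ) :
    ∃ a x : (Σ i : ℕ, Fin (i + 1)) → ℝ, (∀ n, 0 ≤ x n) ∧
      (∀ j : ℕ, Summable fun n => |a n| * x n ^ j) ∧
      ∀ j : ℕ, HasSum (fun n => a n * x n ^ j) (s j) := by
  choose w v hv hlow hdiag hsmall using
    fun i c => exists_atoms_with_leading_moment i c (ε := (1 / 2 : ℝ) ^ i) (by positivity)
  set F : ℕ → ℝ → ℕ → ℝ := fun i c j => ∑ k, w i c k * v i c k ^ j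
  set c := triangularSolve F s
  have habs : ∀ j : ℕ, Summable fun n : (Σ i : ℕ, Fin (i + 1)) =>
      |w n.1 (c n.1) n.2| * v n.1 (c n.1) n.2 ^ j := by
    intro j
    rw [summable_sigma_of_nonneg fun n => mul_nonneg (abs_nonneg _) (pow_nonneg (hv _ _ _) j)]
    refine ⟨fun i => .of_finite, ?_⟩
    simp only [tsum_fintype]
    refine .of_norm_bounded_eventually summable_geometric_two ?_
    rw [Filter.eventually_cofinite]
    refine (Set.finite_le_nat j).subset fun i hi => ?_
    by_contra hij
    refine hi ((Real.norm_of_nonneg ?_).trans_le (hsmall i _ j (by simpa using hij)))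
    exact sum_nonneg fun k _ => mul_nonneg (abs_nonneg _) (pow_nonneg (hv _ _ _) j)
  refine ⟨fun n => w n.1 (c n.1) n.2, fun n => v n.1 (c n.1) n.2, fun n => hv _ _ _, habs,
    fun j => ?_⟩
  have hsum : Summable fun n : (Σ i : ℕ, Fin (i + 1)) =>
      w n.1 (c n.1) n.2 * v n.1 (c n.1) n.2 ^ j := by
    refine .of_abs ((habs j).congr fun n => ?_)
    rw [abs_mul, abs_of_nonneg (pow_nonneg (hv _ _ _) j)]
  have hblocks : HasSum (fun i => F i (c i) j) (s j) := by
    rw [← sum_triangularSolve (F := F) hdiag s j]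
    exact hasSum_sum_of_ne_finset_zero fun i hi => hlow i _ j (by simpa using hi)
  exact hblocks.unique (hsum.hasSum.sigma fun i => hasSum_fintype _) ▸ hsum.hasSum

section PosPartSumDirac

variable {ι X E : Type*} [MeasurableSpace X] [NormedAddCommGroup E] {a : ι → ℝ} {x : ι → X}

noncomputable def posPartSumDirac (a : ι → ℝ) (x : ι → X) : Measure X :=
  Measure.sum fun n => ENNReal.ofReal (a n) • Measure.dirac (x n)

theorem posPartSumDirac_apply_eq_zero {s : Set X} (hs : MeasurableSet s) (hx : ∀ n, x n ∉ s) :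
    posPartSumDirac a x s = 0 := by
  simp [posPartSumDirac, Measure.sum_apply _ hs, Measure.dirac_apply' _ hs, hx]

variable [Countable ι] [MeasurableSingletonClass X] {f : X → E}

theorem integrable_posPartSumDirac (h : Summable fun n => |a n| * ‖f (x n)‖) :
    Integrable f (posPartSumDirac a x) :=
  integrable_sum_dirac (fun _ => ENNReal.ofReal_ne_top) <| h.of_nonneg_of_le
    (fun _ => by positivity) fun n => by
      rw [ENNReal.toReal_ofReal']
      exact mul_le_mul_of_nonneg_right (max_le (le_abs_self _) (abs_nonneg _)) (norm_nonneg _)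

theorem hasSum_integral_posPartSumDirac_sub [NormedSpace ℝ E] [CompleteSpace E]
    (h : Summable fun n => |a n| * ‖f (x n)‖) :
    HasSum (fun n => a n • f (x n))
      ((∫ y, f y ∂posPartSumDirac a x) - ∫ y, f y ∂posPartSumDirac (-a) x) := by
  have hpos := hasSum_integral_measure (integrable_posPartSumDirac h)
  have hneg := hasSum_integral_measure (integrable_posPartSumDirac (a := -a) (by simpa using h))
  refine (hpos.sub hneg).congr_fun fun n => ?_
  simp only [integral_smul_measure, integral_dirac, ENNReal.toReal_ofReal', ← sub_smul,
    Pi.neg_apply, max_zero_sub_max_neg_zero_eq_self]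

end PosPartSumDirac

/-- Boas' theorem: every real sequence is the moment sequence of a signed measure on
`[0,∞)`, i.e. the difference of two Stieltjes moment sequences. -/
theorem stmt19 (s : ℕ → ℝ) :
    ∃ μp μm : Measure ℝ,
      μp (Set.Iio 0) = 0 ∧ μm (Set.Iio 0) = 0 ∧
      (∀ i : ℕ, Integrable (fun x : ℝ => x ^ i) μp) ∧
      (∀ i : ℕ, Integrable (fun x : ℝ => x ^ i) μm) ∧
      ∀ i : ℕ, s i = (∫ x, x ^ i ∂μp) - ∫ x, x ^ i ∂μm := by
  obtain ⟨a, x, hx, habs, hmom⟩ := exists_atoms_hasSum_moments s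
  have hnorm : ∀ i : ℕ, Summable fun n => |a n| * ‖x n ^ i‖ := fun i =>
    (habs i).congr fun n => by rw [norm_pow, Real.norm_of_nonneg (hx n)]
  have hIio : ∀ n, x n ∉ Set.Iio 0 := fun n => not_lt.2 (hx n)
  refine ⟨posPartSumDirac a x, posPartSumDirac (-a) x,
    posPartSumDirac_apply_eq_zero measurableSet_Iio hIio,
    posPartSumDirac_apply_eq_zero measurableSet_Iio hIio,
    fun i => integrable_posPartSumDirac (hnorm i),
    fun i => integrable_posPartSumDirac (by simpa using hnorm i),
    fun i => (hmom i).unique (hasSum_integral_posPartSumDirac_sub (hnorm i))⟩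
end
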